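/- arXiv:math/0105223 — 2 statements merged into one kernel-verified Lean document; each statement's English description precedes it below -/
import Mathlib

section
/- Closedness is preserved under composition of Lagrangians: let L be an r-Lagrangian on R^n with d̄L = 0, and let F: jets of r-paths in R^m → R^n be given by finite-order jet functions F^μ([x]). Define the composed r-Lagrangian (L∘F) on R^m by substituting y^μ_σ := D_σ F^μ([x]) into L([y]). Then d̄(L∘F) = 0. -/
open scoped BigOperators

/-- Multi-indices in the `r` parameters `t^1, …, t^r`, as exponent vectors. -/
abbrev PIdx (r : ℕ) := Fin r → ℕ

/-- The space of infinite jets (tangent elements) at a point of maps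
`ℝ^r → ℝ^m`: the coordinates are `x^a_σ` (`x^a = x^a_∅` included). -/
abbrev PJet (r m : ℕ) := (Fin m × PIdx r) → ℝ

variable {r m : ℕ}

/-- Partial derivative with respect to the jet coordinate `x^a_σ`. -/
noncomputable def ppd (c : Fin m × PIdx r) (f : PJet r m → ℝ) (p : PJet r m) : ℝ :=
  deriv (fun t => f (Function.update p c t)) (p c)

/-- The total derivative `D_i = Σ_{a,σ} x^a_{iσ} ∂/∂x^a_σ` in the `i`-th parameter. -/
noncomputable def ptotalD (i : Fin r) (f : PJet r m → ℝ) (p : PJet r m) : ℝ :=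
  ∑' c : Fin m × PIdx r, p (c.1, c.2 + Pi.single i 1) * ppd c f p

/-- The iterated total derivative `D_σ`. -/
noncomputable def pDmulti (σ : PIdx r) (f : PJet r m → ℝ) : PJet r m → ℝ :=
  (List.finRange r).foldr (fun i g => (ptotalD i)^[σ i] g) f

/-- Total degree of a multi-index. -/
def pdeg (σ : PIdx r) : ℕ := ∑ i, σ i

/-- An `r`-Lagrangian: a smooth function of finitely many jet coordinates. -/
def IsPJetFun (f : PJet r m → ℝ) : Prop :=
  ∃ (N : ℕ) (c : Fin N → Fin m × PIdx r) (F : (Fin N → ℝ) → ℝ),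
    ContDiff ℝ (⊤ : ℕ∞) F ∧ ∀ p, f p = F (fun i => p (c i))

/-- The variational derivative `F_a(L) = Σ_σ (−1)^{|σ|} D_σ (∂L/∂x^a_σ)`. -/
noncomputable def varder (a : Fin m) (L : PJet r m → ℝ) (p : PJet r m) : ℝ :=
  ∑' σ : PIdx r, (-1 : ℝ) ^ pdeg σ * pDmulti σ (ppd (a, σ) L) p

/-- Lift an `r`-Lagrangian to a function of jets in `r+1` parameters
(a multi-index `σ` in `t^1, …, t^r` becomes `Fin.snoc σ 0`). -/
def plift (L : PJet r m → ℝ) : PJet (r + 1) m → ℝ :=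
  fun p => L (fun c => p (c.1, Fin.snoc c.2 0))

/-- The variational differential `d̄L = Σ_a x^a_{r+1} F_a(L)`,
an `(r+1)`-Lagrangian. -/
noncomputable def dbar (L : PJet r m → ℝ) : PJet (r + 1) m → ℝ :=
  fun p => ∑ a : Fin m,
    p (a, Pi.single (Fin.last r) 1) * plift (fun q => varder a L q) p

/-- Composition of Lagrangians: substitute the jet prolongation
`y^μ_σ := D_σ F^μ([x])` of the `ℝ^n`-valued jet function `F` into the
`r`-Lagrangian `L` on `ℝ^n`. -/
noncomputable def compLag {r m n : ℕ} (L : PJet r n → ℝ)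
    (F : Fin n → PJet r m → ℝ) : PJet r m → ℝ :=
  fun p => L (fun c => pDmulti c.2 (F c.1) p)

namespace JetPf


structure Rep (r m : ℕ) (f : PJet r m → ℝ) : Type 1 where
  ι : Type
  fin : Fintype ι
  dec : DecidableEq ι
  c : ι → Fin m × PIdx r
  F : (ι → ℝ) → ℝ
  smooth : ContDiff ℝ (⊤ : ℕ∞) F
  eq : ∀ p, f p = F fun i => p (c i)

attribute [instance] Rep.fin Rep.dec

variable {f u w : PJet r m → ℝ}

def Rep.x0 (R : Rep r m f) (p : PJet r m) : R.ι → ℝ := fun i => p (R.c i)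

noncomputable def Rep.vv (R : Rep r m f) (c0 : Fin m × PIdx r) : R.ι → ℝ :=
  fun j => if R.c j = c0 then 1 else 0

def Rep.S (R : Rep r m f) : Finset (Fin m × PIdx r) := Finset.image R.c Finset.univ

lemma Rep.hasDerivAt' (R : Rep r m f) (p : PJet r m) (c0 : Fin m × PIdx r) :
    HasDerivAt (fun t => f (Function.update p c0 t))
      (fderiv ℝ R.F (R.x0 p) (R.vv c0)) (p c0) := by
  have hl : HasDerivAt (fun t : ℝ => R.x0 p + (t - p c0) • R.vv c0) (R.vv c0) (p c0) := by
    simpa using (((hasDerivAt_id (p c0)).sub_const (p c0)).smul_const (R.vv c0)).const_add (R.x0 p)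
  have hx : R.x0 p + ((p c0) - p c0) • R.vv c0 = R.x0 p := by simp
  have hF0 := (R.smooth.differentiable (by simp) (R.x0 p)).hasFDerivAt
  rw [← hx] at hF0
  have hF := hF0.comp_hasDerivAt (p c0) hl
  have heq : (fun t => f (Function.update p c0 t))
      = fun t => R.F (R.x0 p + (t - p c0) • R.vv c0) := by
    funext t
    rw [R.eq]
    congr 1
    funext i
    simp only [Function.update_apply, Rep.x0, Rep.vv, Pi.add_apply, Pi.smul_apply, smul_eq_mul]
    by_cases h : R.c i = c0
    · simp [h]
    · simp [h]
  rw [heq]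
  rw [hx] at hF
  exact hF

lemma Rep.ppd_eq (R : Rep r m f) (c0 : Fin m × PIdx r) (p : PJet r m) :
    ppd c0 f p = fderiv ℝ R.F (R.x0 p) (R.vv c0) :=
  (R.hasDerivAt' p c0).deriv

lemma Rep.ppd_not_mem (R : Rep r m f) {c0 : Fin m × PIdx r} (h : c0 ∉ R.S) (p : PJet r m) :
    ppd c0 f p = 0 := by
  rw [R.ppd_eq c0 p]
  have : R.vv c0 = 0 := by
    funext j
    have : R.c j ≠ c0 := fun hc => h (by simp [Rep.S, ← hc])
    simp [Rep.vv, this]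
  rw [this, map_zero]

noncomputable def Rep.ppdRep (R : Rep r m f) (c0 : Fin m × PIdx r) : Rep r m (ppd c0 f) where
  ι := R.ι
  fin := R.fin
  dec := R.dec
  c := R.c
  F := fun x => fderiv ℝ R.F x (R.vv c0)
  smooth := (R.smooth.fderiv_right (by simp)).clm_apply contDiff_const
  eq := fun p => R.ppd_eq c0 p

lemma Rep.vv_eq_sum (R : Rep r m f) (c0 : Fin m × PIdx r) :
    R.vv c0 = ∑ j ∈ Finset.univ.filter (fun j => R.c j = c0), Pi.single j (1:ℝ) := by
  funext k
  rw [Finset.sum_apply]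
  have : ∀ j ∈ Finset.univ.filter (fun j => R.c j = c0), ((Pi.single j (1:ℝ) : R.ι → ℝ)) k
      = if j = k then (if R.c k = c0 then (1:ℝ) else 0) else 0 := by
    intro j hj
    simp only [Finset.mem_filter] at hj
    rw [Pi.single_apply]
    by_cases h : j = k
    · subst h; simp [hj.2]
    · rw [if_neg (fun hk => h hk.symm), if_neg h]
  rw [Finset.sum_congr rfl this, Finset.sum_ite_eq' _ k]
  by_cases h : R.c k = c0 <;> simp [Rep.vv, h]

lemma Rep.ppd_eq_sum_filter (R : Rep r m f) (c0 : Fin m × PIdx r) (p : PJet r m) :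
    ppd c0 f p = ∑ j ∈ Finset.univ.filter (fun j => R.c j = c0),
      fderiv ℝ R.F (R.x0 p) (Pi.single j 1) := by
  rw [R.ppd_eq c0 p, R.vv_eq_sum c0, map_sum]

def J (f : PJet r m → ℝ) : Prop := Nonempty (Rep r m f)

lemma J.of_eq (h : J u) (he : ∀ p, u p = w p) : J w := (funext he : u = w) ▸ h

lemma J.hasDerivAt (h : J f) (p : PJet r m) (c0 : Fin m × PIdx r) :
    HasDerivAt (fun t => f (Function.update p c0 t)) (ppd c0 f p) (p c0) := by
  obtain ⟨R⟩ := h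
  have := R.hasDerivAt' p c0
  rwa [← R.ppd_eq] at this

noncomputable def Rep.comp {ι₀ : Type} [Fintype ι₀] [DecidableEq ι₀] (Φ : (ι₀ → ℝ) → ℝ)
    (hΦ : ContDiff ℝ (⊤ : ℕ∞) Φ) (g : ι₀ → PJet r m → ℝ) (Rg : ∀ k, Rep r m (g k)) :
    Rep r m (fun p => Φ fun k => g k p) where
  ι := Σ k : ι₀, (Rg k).ι
  fin := inferInstance
  dec := inferInstance
  c := fun j => (Rg j.1).c j.2
  F := fun x => Φ fun k => (Rg k).F fun i => x ⟨k, i⟩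
  smooth := hΦ.comp (contDiff_pi.2 fun k => (Rg k).smooth.comp
    (contDiff_pi.2 fun i =>
      (ContinuousLinearMap.proj (R := ℝ) (φ := fun _ : (Σ k : ι₀, (Rg k).ι) => ℝ)
        (⟨k, i⟩ : Σ k : ι₀, (Rg k).ι)).contDiff))
  eq := fun p => congrArg Φ (funext fun k => (Rg k).eq p)

lemma J.comp {ι₀ : Type} [Fintype ι₀] [DecidableEq ι₀] {Φ : (ι₀ → ℝ) → ℝ}
    (hΦ : ContDiff ℝ (⊤ : ℕ∞) Φ) {g : ι₀ → PJet r m → ℝ} (hg : ∀ k, J (g k)) :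
    J (fun p => Φ fun k => g k p) :=
  ⟨Rep.comp Φ hΦ g fun k => (hg k).some⟩

lemma J.const (k : ℝ) : J (fun _ : PJet r m => k) :=
  ⟨⟨Empty, inferInstance, inferInstance, Empty.elim, fun _ => k, contDiff_const,
    fun _ => rfl⟩⟩

lemma J.coord (c1 : Fin m × PIdx r) : J (fun p : PJet r m => p c1) :=
  ⟨⟨PUnit, inferInstance, inferInstance, fun _ => c1, fun x => x PUnit.unit,
    (ContinuousLinearMap.proj (R := ℝ) (φ := fun _ : PUnit => ℝ) PUnit.unit).contDiff,
    fun _ => rfl⟩⟩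

lemma J.mul (hu : J u) (hw : J w) : J (fun p => u p * w p) := by
  have hΦ : ContDiff ℝ (⊤ : ℕ∞) (fun x : Bool → ℝ => x true * x false) :=
    ((ContinuousLinearMap.proj (R := ℝ) (φ := fun _ : Bool => ℝ) true).contDiff).mul
      ((ContinuousLinearMap.proj (R := ℝ) (φ := fun _ : Bool => ℝ) false).contDiff)
  have := J.comp hΦ (g := fun b => bif b then u else w)
    (fun b => by cases b <;> [exact hw; exact hu])
  exact this

lemma J.sum_mul {κ : Type} (T : Finset κ) (k : κ → ℝ) (u : κ → PJet r m → ℝ)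
    (hu : ∀ j, J (u j)) : J (fun p => ∑ j ∈ T, k j * u j p) := by
  classical
  have hΦ : ContDiff ℝ (⊤ : ℕ∞) (fun x : {j // j ∈ T} → ℝ => ∑ j : {j // j ∈ T}, k j.1 * x j) :=
    ContDiff.sum fun j _ => contDiff_const.mul
      (ContinuousLinearMap.proj (R := ℝ) (φ := fun _ : {j // j ∈ T} => ℝ) j).contDiff
  have h := J.comp hΦ (g := fun j : {j // j ∈ T} => u j.1) (fun j => hu j.1)
  exact h.of_eq fun p => by
    exact Finset.sum_coe_sort T (fun j => k j * u j p)

lemma J.ppd (h : J f) (c0 : Fin m × PIdx r) : J (ppd c0 f) := ⟨h.some.ppdRep c0⟩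

/-! ### basic ppd calculus -/

lemma ppd_congr (h : ∀ q, u q = w q) (c0 : Fin m × PIdx r) (p : PJet r m) :
    ppd c0 u p = ppd c0 w p := by
  have : u = w := funext h
  rw [this]

lemma ppd_const (k : ℝ) (c0 : Fin m × PIdx r) (p : PJet r m) :
    ppd c0 (fun _ => k) p = 0 := by simp [ppd]

lemma ppd_coord (c1 c0 : Fin m × PIdx r) (p : PJet r m) :
    ppd c0 (fun q => q c1) p = if c1 = c0 then 1 else 0 := by
  unfold ppd
  have : (fun t => Function.update p c0 t c1) = fun t => if c1 = c0 then t else p c1 :=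
    funext fun t => Function.update_apply p c0 t c1
  rw [this]
  by_cases h : c1 = c0
  · simp [h]
  · simp [h]

lemma ppd_mul (hu : J u) (hw : J w) (c0 : Fin m × PIdx r) (p : PJet r m) :
    ppd c0 (fun q => u q * w q) p = ppd c0 u p * w p + u p * ppd c0 w p := by
  have h := (hu.hasDerivAt p c0).mul (hw.hasDerivAt p c0)
  rw [Function.update_eq_self] at h
  exact h.deriv

lemma ppd_sum {κ : Type} (T : Finset κ) (u : κ → PJet r m → ℝ) (hu : ∀ j, J (u j))
    (c0 : Fin m × PIdx r) (p : PJet r m) :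
    ppd c0 (fun q => ∑ j ∈ T, u j q) p = ∑ j ∈ T, ppd c0 (u j) p :=
  (HasDerivAt.fun_sum fun j _ => (hu j).hasDerivAt p c0).deriv

lemma ppd_const_mul (k : ℝ) (hu : J u) (c0 : Fin m × PIdx r) (p : PJet r m) :
    ppd c0 (fun q => k * u q) p = k * ppd c0 u p :=
  ((hu.hasDerivAt p c0).const_mul k).deriv

/-! ### basic ptotalD calculus -/

lemma ptotalD_eq_sum (R : Rep r m f) {T : Finset (Fin m × PIdx r)} (hT : R.S ⊆ T)
    (i : Fin r) (p : PJet r m) :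
    ptotalD i f p = ∑ c0 ∈ T, p (c0.1, c0.2 + Pi.single i 1) * ppd c0 f p :=
  tsum_eq_sum fun c0 hc => by rw [R.ppd_not_mem (fun hm => hc (hT hm)), mul_zero]

lemma ptotalD_congr (h : ∀ q, u q = w q) (i : Fin r) (p : PJet r m) :
    ptotalD i u p = ptotalD i w p :=
  tsum_congr fun c0 => by rw [ppd_congr h]

lemma ptotalD_zero (h : ∀ q, u q = 0) (i : Fin r) (p : PJet r m) :
    ptotalD i u p = 0 := by
  have hz : ∀ c0, ppd c0 u p = (0:ℝ) := fun c0 => by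
    rw [ppd_congr h c0 p, ppd_const]
  simp [ptotalD, hz]

lemma ptotalD_coord (c1 : Fin m × PIdx r) (i : Fin r) (p : PJet r m) :
    ptotalD i (fun q => q c1) p = p (c1.1, c1.2 + Pi.single i 1) := by
  unfold ptotalD
  rw [tsum_eq_sum (s := {c1}) (fun c0 hc => by
    rw [ppd_coord]
    rw [if_neg (fun hh : c1 = c0 => hc (by simp [hh]))]
    ring)]
  simp [ppd_coord]

lemma ptotalD_sum {κ : Type} (T : Finset κ) (u : κ → PJet r m → ℝ) (hu : ∀ j, J (u j))
    (i : Fin r) (p : PJet r m) :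
    ptotalD i (fun q => ∑ j ∈ T, u j q) p = ∑ j ∈ T, ptotalD i (u j) p := by
  classical
  set Rj := fun j => (hu j).some with hRj
  set Sbig := T.biUnion (fun j => (Rj j).S) with hSbig
  have hsupp : ∀ c0 ∉ Sbig, p (c0.1, c0.2 + Pi.single i 1) * ppd c0 (fun q => ∑ j ∈ T, u j q) p = 0 := by
    intro c0 hc
    rw [ppd_sum T u hu]
    have : ∀ j ∈ T, ppd c0 (u j) p = 0 := fun j hj =>
      (Rj j).ppd_not_mem (fun hm => hc (Finset.mem_biUnion.2 ⟨j, hj, hm⟩)) p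
    rw [Finset.sum_congr rfl this]
    simp
  rw [ptotalD, tsum_eq_sum hsupp]
  have : ∀ c0 ∈ Sbig, p (c0.1, c0.2 + Pi.single i 1) * ppd c0 (fun q => ∑ j ∈ T, u j q) p
      = ∑ j ∈ T, p (c0.1, c0.2 + Pi.single i 1) * ppd c0 (u j) p := by
    intro c0 _
    rw [ppd_sum T u hu, Finset.mul_sum]
  rw [Finset.sum_congr rfl this, Finset.sum_comm]
  refine Finset.sum_congr rfl fun j hj => ?_
  exact (ptotalD_eq_sum (Rj j) (Finset.subset_biUnion_of_mem (fun j => (Rj j).S) hj) i p).symm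

lemma ptotalD_const_mul (k : ℝ) (hu : J u) (i : Fin r) (p : PJet r m) :
    ptotalD i (fun q => k * u q) p = k * ptotalD i u p := by
  unfold ptotalD
  rw [← tsum_mul_left]
  exact tsum_congr fun c0 => by rw [ppd_const_mul k hu]; ring

lemma ptotalD_mul (hu : J u) (hw : J w) (i : Fin r) (p : PJet r m) :
    ptotalD i (fun q => u q * w q) p = ptotalD i u p * w p + u p * ptotalD i w p := by
  classical
  obtain ⟨Ru⟩ := hu; obtain ⟨Rw⟩ := hw
  have hsupp : ∀ c0 ∉ Ru.S ∪ Rw.S,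
      p (c0.1, c0.2 + Pi.single i 1) * ppd c0 (fun q => u q * w q) p = 0 := by
    intro c0 hc
    rw [ppd_mul ⟨Ru⟩ ⟨Rw⟩, Ru.ppd_not_mem (fun hm => hc (Finset.mem_union_left _ hm)),
      Rw.ppd_not_mem (fun hm => hc (Finset.mem_union_right _ hm))]
    ring
  rw [ptotalD, tsum_eq_sum hsupp]
  have : ∀ c0 ∈ Ru.S ∪ Rw.S, p (c0.1, c0.2 + Pi.single i 1) * ppd c0 (fun q => u q * w q) p
      = p (c0.1, c0.2 + Pi.single i 1) * ppd c0 u p * w p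
        + u p * (p (c0.1, c0.2 + Pi.single i 1) * ppd c0 w p) := by
    intro c0 _
    rw [ppd_mul ⟨Ru⟩ ⟨Rw⟩]
    ring
  rw [Finset.sum_congr rfl this, Finset.sum_add_distrib, ← Finset.sum_mul, ← Finset.mul_sum]
  rw [← ptotalD_eq_sum Ru Finset.subset_union_left i p,
    ← ptotalD_eq_sum Rw Finset.subset_union_right i p]

lemma Rep.mem_S (R : Rep r m f) (j : R.ι) : R.c j ∈ R.S := by
  simp [Rep.S]

noncomputable def Rep.D (R : Rep r m f) (i : Fin r) : Rep r m (ptotalD i f) where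
  ι := R.ι ⊕ R.ι
  fin := inferInstance
  dec := inferInstance
  c := Sum.elim R.c (fun j => ((R.c j).1, (R.c j).2 + Pi.single i 1))
  F := fun x => ∑ j : R.ι, x (Sum.inr j) * fderiv ℝ R.F (fun k => x (Sum.inl k)) (Pi.single j 1)
  smooth := by
    refine ContDiff.sum fun j _ => ContDiff.mul ?_ ?_
    · exact (ContinuousLinearMap.proj (R := ℝ) (φ := fun _ : R.ι ⊕ R.ι => ℝ)
        (Sum.inr j)).contDiff
    · refine ContDiff.comp ((R.smooth.fderiv_right (by simp)).clm_apply contDiff_const) ?_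
      exact contDiff_pi.2 fun k => (ContinuousLinearMap.proj (R := ℝ)
        (φ := fun _ : R.ι ⊕ R.ι => ℝ) (Sum.inl k)).contDiff
  eq := by
    intro p
    simp only [Sum.elim_inl, Sum.elim_inr]
    rw [ptotalD_eq_sum R (le_refl _) i p]
    have h1 : ∀ c0 ∈ R.S, p (c0.1, c0.2 + Pi.single i 1) * ppd c0 f p
        = ∑ j ∈ Finset.univ.filter (fun j => R.c j = c0),
            p ((R.c j).1, (R.c j).2 + Pi.single i 1) * fderiv ℝ R.F (R.x0 p) (Pi.single j 1) := by
      intro c0 _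
      rw [R.ppd_eq_sum_filter c0 p, Finset.mul_sum]
      refine Finset.sum_congr rfl fun j hj => ?_
      simp only [Finset.mem_filter] at hj
      rw [hj.2]
    rw [Finset.sum_congr rfl h1]
    exact Finset.sum_fiberwise_of_maps_to (fun j _ => R.mem_S j)
      (fun j => p ((R.c j).1, (R.c j).2 + Pi.single i 1) * fderiv ℝ R.F (R.x0 p) (Pi.single j 1))

lemma J.D (h : J f) (i : Fin r) : J (ptotalD i f) := ⟨h.some.D i⟩

lemma Rep.S_ppdRep (R : Rep r m f) (c0 : Fin m × PIdx r) : (R.ppdRep c0).S = R.S := rfl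

lemma ppd_ppd_comm (hf : J f) (c0 c1 : Fin m × PIdx r) (p : PJet r m) :
    ppd c1 (ppd c0 f) p = ppd c0 (ppd c1 f) p := by
  obtain ⟨R⟩ := hf
  have hdF : Differentiable ℝ (fderiv ℝ R.F) :=
    (R.smooth.fderiv_right (m := (⊤ : ℕ∞)) (by simp)).differentiable (by simp)
  have key : ∀ w z : Fin m × PIdx r,
      ppd z (ppd w f) p = fderiv ℝ (fderiv ℝ R.F) (R.x0 p) (R.vv z) (R.vv w) := by
    intro w z
    rw [(R.ppdRep w).ppd_eq z p]
    have h2 := fderiv_clm_apply (x := R.x0 p) (c := fderiv ℝ R.F) (u := fun _ => R.vv w)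
      (hdF.differentiableAt) (differentiableAt_const _)
    have h3 : (fderiv ℝ (fun y => fderiv ℝ R.F y (R.vv w)) (R.x0 p)) (R.vv z)
        = fderiv ℝ (fderiv ℝ R.F) (R.x0 p) (R.vv z) (R.vv w) := by
      rw [h2]; simp
    exact h3
  rw [key c0 c1, key c1 c0]
  exact second_derivative_symmetric (f := R.F) (f' := fderiv ℝ R.F)
    (fun y => (R.smooth.differentiable (by simp) y).hasFDerivAt)
    ((hdF (R.x0 p)).hasFDerivAt) (R.vv c1) (R.vv c0)

lemma ppd_ptotalD (hf : J f) (c0 : Fin m × PIdx r) (i : Fin r) (p : PJet r m) :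
    ppd c0 (ptotalD i f) p = ptotalD i (ppd c0 f) p +
      (if 1 ≤ c0.2 i then ppd (c0.1, c0.2 - Pi.single i 1) f p else 0) := by
  classical
  obtain ⟨R⟩ := hf
  have hfn : ∀ q, ptotalD i f q
      = ∑ c ∈ R.S, q (c.1, c.2 + Pi.single i 1) * ppd c f q :=
    fun q => ptotalD_eq_sum R (le_refl _) i q
  have hu : ∀ c : Fin m × PIdx r, J (fun q : PJet r m => q (c.1, c.2 + Pi.single i 1) * ppd c f q) :=
    fun c => (J.coord _).mul ((J.ppd ⟨R⟩ c))
  rw [ppd_congr hfn c0 p,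
    ppd_sum R.S (fun c => fun q => q (c.1, c.2 + Pi.single i 1) * ppd c f q) hu c0 p]
  have hterm : ∀ c ∈ R.S,
      ppd c0 (fun q => q (c.1, c.2 + Pi.single i 1) * ppd c f q) p
      = (if (c.1, c.2 + Pi.single i 1) = c0 then (1:ℝ) else 0) * ppd c f p
        + p (c.1, c.2 + Pi.single i 1) * ppd c (ppd c0 f) p := by
    intro c _
    rw [ppd_mul (J.coord _) (J.ppd ⟨R⟩ c), ppd_coord, ppd_ppd_comm ⟨R⟩ c c0 p]
  rw [Finset.sum_congr rfl hterm, Finset.sum_add_distrib]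
  have h2 : ∑ c ∈ R.S, p (c.1, c.2 + Pi.single i 1) * ppd c (ppd c0 f) p
      = ptotalD i (ppd c0 f) p := by
    rw [ptotalD_eq_sum (R.ppdRep c0) (by rw [Rep.S_ppdRep]) i p]
  rw [h2, add_comm]
  congr 1
  by_cases h1 : 1 ≤ c0.2 i
  · rw [if_pos h1]
    set cs : Fin m × PIdx r := (c0.1, c0.2 - Pi.single i 1) with hcs
    have hiff : ∀ c : Fin m × PIdx r, ((c.1, c.2 + Pi.single i 1) = c0) ↔ c = cs := by
      intro c
      constructor
      · intro h
        have h1' : c.1 = c0.1 := (Prod.ext_iff.1 h).1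
        have h2' : c.2 + Pi.single i 1 = c0.2 := (Prod.ext_iff.1 h).2
        have : c.2 = c0.2 - Pi.single i 1 := by
          funext j
          have := congrFun h2' j
          simp only [Pi.add_apply] at this
          simp only [Pi.sub_apply]
          omega
        rw [hcs, Prod.ext_iff]
        exact ⟨h1', this⟩
      · intro h
        subst h
        rw [hcs, Prod.ext_iff]
        refine ⟨rfl, ?_⟩
        funext j
        have hs : (Pi.single i 1 : PIdx r) j = if j = i then 1 else 0 := Pi.single_apply i 1 j
        simp only [Pi.add_apply, Pi.sub_apply, hs]
        by_cases hji : j = i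
        · rw [if_pos hji, hji]; omega
        · rw [if_neg hji]; omega
    have h3 : ∀ c ∈ R.S,
        (if (c.1, c.2 + Pi.single i 1) = c0 then (1:ℝ) else 0) * ppd c f p
        = if c = cs then ppd c f p else 0 := by
      intro c _
      by_cases h : c = cs
      · rw [if_pos ((hiff c).2 h), if_pos h, one_mul]
      · rw [if_neg (fun he => h ((hiff c).1 he)), if_neg h, zero_mul]
    rw [Finset.sum_congr rfl h3, Finset.sum_ite_eq' R.S cs]
    by_cases hmem : cs ∈ R.S
    · rw [if_pos hmem]
    · rw [if_neg hmem, R.ppd_not_mem hmem]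
  · rw [if_neg h1]
    have h3 : ∀ c ∈ R.S,
        (if (c.1, c.2 + Pi.single i 1) = c0 then (1:ℝ) else 0) * ppd c f p = 0 := by
      intro c _
      have : ¬((c.1, c.2 + Pi.single i 1) = c0) := by
        intro he
        have h2' : c.2 i + (Pi.single i 1 : PIdx r) i = c0.2 i :=
          congrFun (congrArg Prod.snd he) i
        rw [Pi.single_eq_same] at h2'
        omega
      rw [if_neg this, zero_mul]
    rw [Finset.sum_congr rfl h3]
    simp

lemma ptotalD_comm (hf : J f) (i i' : Fin r) (p : PJet r m) :
    ptotalD i (ptotalD i' f) p = ptotalD i' (ptotalD i f) p := by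
  classical
  obtain ⟨R⟩ := hf
  have key : ∀ (a b : Fin r),
      ptotalD a (ptotalD b f) p
      = (∑ c ∈ R.S, p (c.1, c.2 + Pi.single b 1 + Pi.single a 1) * ppd c f p)
        + ∑ c ∈ R.S, ∑ c' ∈ R.S,
            p (c.1, c.2 + Pi.single b 1) * (p (c'.1, c'.2 + Pi.single a 1)
              * ppd c' (ppd c f) p) := by
    intro a b
    have hfn : ∀ q, ptotalD b f q
        = ∑ c ∈ R.S, q (c.1, c.2 + Pi.single b 1) * ppd c f q :=
      fun q => ptotalD_eq_sum R (le_refl _) b q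
    have hu : ∀ c : Fin m × PIdx r,
        J (fun q : PJet r m => q (c.1, c.2 + Pi.single b 1) * ppd c f q) :=
      fun c => (J.coord _).mul (J.ppd ⟨R⟩ c)
    rw [ptotalD_congr hfn a p,
      ptotalD_sum R.S (fun c => fun q => q (c.1, c.2 + Pi.single b 1) * ppd c f q) hu a p]
    have hterm : ∀ c ∈ R.S,
        ptotalD a (fun q => q (c.1, c.2 + Pi.single b 1) * ppd c f q) p
        = p (c.1, c.2 + Pi.single b 1 + Pi.single a 1) * ppd c f p
          + p (c.1, c.2 + Pi.single b 1) * (∑ c' ∈ R.S,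
              p (c'.1, c'.2 + Pi.single a 1) * ppd c' (ppd c f) p) := by
      intro c _
      rw [ptotalD_mul (J.coord _) (J.ppd ⟨R⟩ c), ptotalD_coord]
      congr 2
      rw [ptotalD_eq_sum (R.ppdRep c) (by rw [Rep.S_ppdRep]) a p]
    rw [Finset.sum_congr rfl hterm, Finset.sum_add_distrib]
    congr 1
    exact Finset.sum_congr rfl fun c _ => by rw [Finset.mul_sum]
  rw [key i i', key i' i]
  congr 1
  · refine Finset.sum_congr rfl fun c _ => ?_
    rw [add_right_comm]
  · rw [Finset.sum_comm]
    refine Finset.sum_congr rfl fun c _ => Finset.sum_congr rfl fun c' _ => ?_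
    rw [ppd_ppd_comm ⟨R⟩ c' c]
    ring

/-! ### additive ppd/ptotalD lemmas -/

lemma ppd_add (hu : J u) (hw : J w) (c0 : Fin m × PIdx r) (p : PJet r m) :
    ppd c0 (fun q => u q + w q) p = ppd c0 u p + ppd c0 w p :=
  ((hu.hasDerivAt p c0).add (hw.hasDerivAt p c0)).deriv

lemma ppd_sub (hu : J u) (hw : J w) (c0 : Fin m × PIdx r) (p : PJet r m) :
    ppd c0 (fun q => u q - w q) p = ppd c0 u p - ppd c0 w p :=
  ((hu.hasDerivAt p c0).sub (hw.hasDerivAt p c0)).deriv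

lemma ptotalD_add (hu : J u) (hw : J w) (i : Fin r) (p : PJet r m) :
    ptotalD i (fun q => u q + w q) p = ptotalD i u p + ptotalD i w p := by
  classical
  obtain ⟨Ru⟩ := hu; obtain ⟨Rw⟩ := hw
  have hsupp : ∀ c0 ∉ Ru.S ∪ Rw.S,
      p (c0.1, c0.2 + Pi.single i 1) * ppd c0 (fun q => u q + w q) p = 0 := by
    intro c0 hc
    rw [ppd_add ⟨Ru⟩ ⟨Rw⟩, Ru.ppd_not_mem (fun hm => hc (Finset.mem_union_left _ hm)),
      Rw.ppd_not_mem (fun hm => hc (Finset.mem_union_right _ hm))]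
    ring
  rw [ptotalD, tsum_eq_sum hsupp]
  have : ∀ c0 ∈ Ru.S ∪ Rw.S,
      p (c0.1, c0.2 + Pi.single i 1) * ppd c0 (fun q => u q + w q) p
      = p (c0.1, c0.2 + Pi.single i 1) * ppd c0 u p
        + p (c0.1, c0.2 + Pi.single i 1) * ppd c0 w p := by
    intro c0 _
    rw [ppd_add ⟨Ru⟩ ⟨Rw⟩]
    ring
  rw [Finset.sum_congr rfl this, Finset.sum_add_distrib,
    ← ptotalD_eq_sum Ru Finset.subset_union_left i p,
    ← ptotalD_eq_sum Rw Finset.subset_union_right i p]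

lemma ptotalD_sub (hu : J u) (hw : J w) (i : Fin r) (p : PJet r m) :
    ptotalD i (fun q => u q - w q) p = ptotalD i u p - ptotalD i w p := by
  classical
  obtain ⟨Ru⟩ := hu; obtain ⟨Rw⟩ := hw
  have hsupp : ∀ c0 ∉ Ru.S ∪ Rw.S,
      p (c0.1, c0.2 + Pi.single i 1) * ppd c0 (fun q => u q - w q) p = 0 := by
    intro c0 hc
    rw [ppd_sub ⟨Ru⟩ ⟨Rw⟩, Ru.ppd_not_mem (fun hm => hc (Finset.mem_union_left _ hm)),
      Rw.ppd_not_mem (fun hm => hc (Finset.mem_union_right _ hm))]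
    ring
  rw [ptotalD, tsum_eq_sum hsupp]
  have : ∀ c0 ∈ Ru.S ∪ Rw.S,
      p (c0.1, c0.2 + Pi.single i 1) * ppd c0 (fun q => u q - w q) p
      = p (c0.1, c0.2 + Pi.single i 1) * ppd c0 u p
        - p (c0.1, c0.2 + Pi.single i 1) * ppd c0 w p := by
    intro c0 _
    rw [ppd_sub ⟨Ru⟩ ⟨Rw⟩]
    ring
  rw [Finset.sum_congr rfl this, Finset.sum_sub_distrib,
    ← ptotalD_eq_sum Ru Finset.subset_union_left i p,
    ← ptotalD_eq_sum Rw Finset.subset_union_right i p]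

/-! ### iterates -/

variable {i a : Fin r} {k : ℕ}

lemma J.iterD (h : J f) (i : Fin r) : ∀ k, J ((ptotalD i)^[k] f)
  | 0 => h
  | (k+1) => by rw [Function.iterate_succ_apply']; exact (h.iterD i k).D i

lemma iter_congr (h : ∀ q, u q = w q) (i : Fin r) :
    ∀ k q, (ptotalD i)^[k] u q = (ptotalD i)^[k] w q
  | 0, q => h q
  | (k+1), q => by
    rw [Function.iterate_succ_apply', Function.iterate_succ_apply']
    exact ptotalD_congr (iter_congr h i k) i q

lemma iter_zero (h : ∀ q, u q = 0) (i : Fin r) :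
    ∀ k q, (ptotalD i)^[k] u q = 0
  | 0, q => h q
  | (k+1), q => by
    rw [Function.iterate_succ_apply']
    exact ptotalD_zero (iter_zero h i k) i q

lemma iter_add (hu : J u) (hw : J w) (i : Fin r) :
    ∀ k q, (ptotalD i)^[k] (fun q => u q + w q) q
      = (ptotalD i)^[k] u q + (ptotalD i)^[k] w q
  | 0, q => rfl
  | (k+1), q => by
    rw [Function.iterate_succ_apply', Function.iterate_succ_apply',
      Function.iterate_succ_apply']
    rw [ptotalD_congr (iter_add hu hw i k) i q]
    exact ptotalD_add (hu.iterD i k) (hw.iterD i k) i q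

lemma iter_sub (hu : J u) (hw : J w) (i : Fin r) :
    ∀ k q, (ptotalD i)^[k] (fun q => u q - w q) q
      = (ptotalD i)^[k] u q - (ptotalD i)^[k] w q
  | 0, q => rfl
  | (k+1), q => by
    rw [Function.iterate_succ_apply', Function.iterate_succ_apply',
      Function.iterate_succ_apply']
    rw [ptotalD_congr (iter_sub hu hw i k) i q]
    exact ptotalD_sub (hu.iterD i k) (hw.iterD i k) i q

lemma iter_const_mul (c : ℝ) (hu : J u) (i : Fin r) :
    ∀ k q, (ptotalD i)^[k] (fun q => c * u q) q = c * (ptotalD i)^[k] u q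
  | 0, q => rfl
  | (k+1), q => by
    rw [Function.iterate_succ_apply', Function.iterate_succ_apply']
    rw [ptotalD_congr (iter_const_mul c hu i k) i q]
    exact ptotalD_const_mul c (hu.iterD i k) i q

lemma iter_sum {κ : Type} (T : Finset κ) (g : κ → PJet r m → ℝ) (hg : ∀ j, J (g j))
    (i : Fin r) : ∀ k q, (ptotalD i)^[k] (fun q => ∑ j ∈ T, g j q) q
      = ∑ j ∈ T, (ptotalD i)^[k] (g j) q
  | 0, q => rfl
  | (k+1), q => by
    rw [Function.iterate_succ_apply']
    rw [ptotalD_congr (iter_sum T g hg i k) i q]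
    rw [ptotalD_sum T (fun j => (ptotalD i)^[k] (g j)) (fun j => (hg j).iterD i k) i q]
    exact Finset.sum_congr rfl fun j _ => by rw [Function.iterate_succ_apply']

lemma iter_comm (hf : J f) (a i : Fin r) :
    ∀ k q, (ptotalD a)^[k] (ptotalD i f) q = ptotalD i ((ptotalD a)^[k] f) q
  | 0, q => rfl
  | (k+1), q => by
    rw [Function.iterate_succ_apply', Function.iterate_succ_apply']
    rw [ptotalD_congr (iter_comm hf a i k) a q]
    exact ptotalD_comm (hf.iterD a k) a i q

/-! ### pDmulti via foldr -/

section Dfold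

variable {σ σ' : PIdx r}

noncomputable def Dfold (σ : PIdx r) (L : List (Fin r)) (f : PJet r m → ℝ) : PJet r m → ℝ :=
  L.foldr (fun i g => (ptotalD i)^[σ i] g) f

lemma pDmulti_eq_Dfold (σ : PIdx r) (f : PJet r m → ℝ) :
    pDmulti σ f = Dfold σ (List.finRange r) f := rfl

lemma J.Dfold (h : J f) (σ : PIdx r) : ∀ L : List (Fin r), J (JetPf.Dfold σ L f)
  | [] => h
  | (a :: L) => (h.Dfold σ L).iterD a (σ a)

lemma J.Dmulti (h : J f) (σ : PIdx r) : J (pDmulti σ f) := h.Dfold σ _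

lemma Dfold_congr (h : ∀ q, u q = w q) (σ : PIdx r) :
    ∀ (L : List (Fin r)) q, Dfold σ L u q = Dfold σ L w q
  | [], q => h q
  | (a :: L), q => iter_congr (Dfold_congr h σ L) a (σ a) q

lemma Dfold_zero (h : ∀ q, u q = 0) (σ : PIdx r) :
    ∀ (L : List (Fin r)) q, Dfold σ L u q = 0
  | [], q => h q
  | (a :: L), q => iter_zero (Dfold_zero h σ L) a (σ a) q

lemma Dfold_add (hu : J u) (hw : J w) (σ : PIdx r) :
    ∀ (L : List (Fin r)) q, Dfold σ L (fun q => u q + w q) q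
      = Dfold σ L u q + Dfold σ L w q
  | [], q => rfl
  | (a :: L), q => by
    have h1 := iter_congr (Dfold_add hu hw σ L) a (σ a) q
    rw [show Dfold σ (a :: L) (fun q => u q + w q) q
      = (ptotalD a)^[σ a] (Dfold σ L (fun q => u q + w q)) q from rfl, h1]
    exact iter_add (hu.Dfold σ L) (hw.Dfold σ L) a (σ a) q

lemma Dfold_sub (hu : J u) (hw : J w) (σ : PIdx r) :
    ∀ (L : List (Fin r)) q, Dfold σ L (fun q => u q - w q) q
      = Dfold σ L u q - Dfold σ L w q
  | [], q => rfl
  | (a :: L), q => by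
    have h1 := iter_congr (Dfold_sub hu hw σ L) a (σ a) q
    rw [show Dfold σ (a :: L) (fun q => u q - w q) q
      = (ptotalD a)^[σ a] (Dfold σ L (fun q => u q - w q)) q from rfl, h1]
    exact iter_sub (hu.Dfold σ L) (hw.Dfold σ L) a (σ a) q

lemma Dfold_const_mul (c : ℝ) (hu : J u) (σ : PIdx r) :
    ∀ (L : List (Fin r)) q, Dfold σ L (fun q => c * u q) q = c * Dfold σ L u q
  | [], q => rfl
  | (a :: L), q => by
    have h1 := iter_congr (Dfold_const_mul c hu σ L) a (σ a) q
    rw [show Dfold σ (a :: L) (fun q => c * u q) q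
      = (ptotalD a)^[σ a] (Dfold σ L (fun q => c * u q)) q from rfl, h1]
    exact iter_const_mul c (hu.Dfold σ L) a (σ a) q

lemma Dfold_sum {κ : Type} (T : Finset κ) (g : κ → PJet r m → ℝ) (hg : ∀ j, J (g j))
    (σ : PIdx r) : ∀ (L : List (Fin r)) q,
      Dfold σ L (fun q => ∑ j ∈ T, g j q) q = ∑ j ∈ T, Dfold σ L (g j) q
  | [], q => rfl
  | (a :: L), q => by
    have h1 := iter_congr (Dfold_sum T g hg σ L) a (σ a) q
    rw [show Dfold σ (a :: L) (fun q => ∑ j ∈ T, g j q) q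
      = (ptotalD a)^[σ a] (Dfold σ L (fun q => ∑ j ∈ T, g j q)) q from rfl, h1]
    exact iter_sum T (fun j => Dfold σ L (g j)) (fun j => (hg j).Dfold σ L) a (σ a) q

lemma Dfold_comm (hf : J f) (σ : PIdx r) (i : Fin r) :
    ∀ (L : List (Fin r)) q, Dfold σ L (ptotalD i f) q = ptotalD i (Dfold σ L f) q
  | [], q => rfl
  | (a :: L), q => by
    have h1 := iter_congr (Dfold_comm hf σ i L) a (σ a) q
    rw [show Dfold σ (a :: L) (ptotalD i f) q
      = (ptotalD a)^[σ a] (Dfold σ L (ptotalD i f)) q from rfl, h1]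
    exact iter_comm (hf.Dfold σ L) a i (σ a) q

lemma Dfold_exponent (h : ∀ b, b ∈ L → σ b = σ' b) :
    ∀ q, Dfold σ L f q = Dfold σ' L f q := by
  induction L with
  | nil => intro q; rfl
  | cons a L ih =>
    intro q
    have ha : σ a = σ' a := h a List.mem_cons_self
    have hL : ∀ b, b ∈ L → σ b = σ' b := fun b hb => h b (List.mem_cons_of_mem a hb)
    show (ptotalD a)^[σ a] (Dfold σ L f) q = (ptotalD a)^[σ' a] (Dfold σ' L f) q
    rw [ha]
    exact iter_congr (fun q' => (ih hL) q') a (σ' a) q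

lemma Dfold_add_single (hf : J f) (σ : PIdx r) (i : Fin r) :
    ∀ (L : List (Fin r)), i ∈ L → L.Nodup →
      ∀ q, Dfold (σ + Pi.single i 1) L f q = ptotalD i (Dfold σ L f) q := by
  intro L
  induction L with
  | nil => intro h; exact (List.not_mem_nil h).elim
  | cons a L ih =>
    intro hmem hnd q
    have hnd' : L.Nodup := (List.nodup_cons.1 hnd).2
    have hna : a ∉ L := (List.nodup_cons.1 hnd).1
    set τ : PIdx r := σ + Pi.single i 1 with hτ
    have hDcons : ∀ (ρ : PIdx r) (g : PJet r m → ℝ),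
        Dfold ρ (a :: L) g = (ptotalD a)^[ρ a] (Dfold ρ L g) := fun _ _ => rfl
    by_cases ha : a = i
    · subst ha
      have hexp : ∀ b, b ∈ L → τ b = σ b := by
        intro b hb
        have hne : b ≠ a := fun h => hna (h ▸ hb)
        rw [hτ]
        show σ b + (Pi.single a 1 : PIdx r) b = σ b
        rw [Pi.single_apply]
        simp [hne]
      have hval : τ a = σ a + 1 := by
        rw [hτ]
        show σ a + (Pi.single a 1 : PIdx r) a = σ a + 1
        rw [Pi.single_eq_same]
      rw [hDcons τ f, hDcons σ f, hval, Function.iterate_succ_apply']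
      refine ptotalD_congr (fun q' => ?_) a q
      exact iter_congr (Dfold_exponent hexp) a (σ a) q'
    · have hiL : i ∈ L := by
        rcases List.mem_cons.1 hmem with h | h
        · exact absurd h.symm ha
        · exact h
      have hval : τ a = σ a := by
        rw [hτ]
        show σ a + (Pi.single i 1 : PIdx r) a = σ a
        rw [Pi.single_apply]
        simp [ha]
      rw [hDcons τ f, hDcons σ f, hval]
      have h1 := iter_congr (fun q' => ih hiL hnd' q') a (σ a) q
      rw [h1]
      exact iter_comm (hf.Dfold σ L) a i (σ a) q

end Dfold

variable {σ σ' : PIdx r}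

lemma pDmulti_congr (h : ∀ q, u q = w q) (σ : PIdx r) (q : PJet r m) :
    pDmulti σ u q = pDmulti σ w q := Dfold_congr h σ _ q

lemma pDmulti_zero (h : ∀ q, u q = 0) (σ : PIdx r) (q : PJet r m) :
    pDmulti σ u q = 0 := Dfold_zero h σ _ q

lemma pDmulti_add (hu : J u) (hw : J w) (σ : PIdx r) (q : PJet r m) :
    pDmulti σ (fun q => u q + w q) q = pDmulti σ u q + pDmulti σ w q :=
  Dfold_add hu hw σ _ q

lemma pDmulti_sub (hu : J u) (hw : J w) (σ : PIdx r) (q : PJet r m) :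
    pDmulti σ (fun q => u q - w q) q = pDmulti σ u q - pDmulti σ w q :=
  Dfold_sub hu hw σ _ q

lemma pDmulti_const_mul (c : ℝ) (hu : J u) (σ : PIdx r) (q : PJet r m) :
    pDmulti σ (fun q => c * u q) q = c * pDmulti σ u q :=
  Dfold_const_mul c hu σ _ q

lemma pDmulti_sum {κ : Type} (T : Finset κ) (g : κ → PJet r m → ℝ) (hg : ∀ j, J (g j))
    (σ : PIdx r) (q : PJet r m) :
    pDmulti σ (fun q => ∑ j ∈ T, g j q) q = ∑ j ∈ T, pDmulti σ (g j) q :=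
  Dfold_sum T g hg σ _ q

lemma pDmulti_comm (hf : J f) (σ : PIdx r) (i : Fin r) (q : PJet r m) :
    pDmulti σ (ptotalD i f) q = ptotalD i (pDmulti σ f) q :=
  Dfold_comm hf σ i _ q

lemma pDmulti_add_single (hf : J f) (σ : PIdx r) (i : Fin r) (q : PJet r m) :
    pDmulti (σ + Pi.single i 1) f q = ptotalD i (pDmulti σ f) q :=
  Dfold_add_single hf σ i _ (List.mem_finRange i) (List.nodup_finRange r) q

lemma pDmulti_zero_idx (f : PJet r m → ℝ) (q : PJet r m) :
    pDmulti (0 : PIdx r) f q = f q := by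
  show Dfold 0 (List.finRange r) f q = f q
  induction (List.finRange r) with
  | nil => rfl
  | cons a L ih => simpa [Dfold] using ih

lemma pdeg_add_single (σ : PIdx r) (i : Fin r) :
    pdeg (σ + Pi.single i 1) = pdeg σ + 1 := by
  unfold pdeg
  have h : ∀ x : Fin r, (σ + Pi.single i 1 : PIdx r) x = σ x + (Pi.single i 1 : PIdx r) x :=
    fun _ => rfl
  rw [Finset.sum_congr rfl (fun x _ => h x), Finset.sum_add_distrib]
  congr 1
  simp

/-! ### the EE operator -/

noncomputable def sgn (σ : PIdx r) : ℝ := (-1) ^ pdeg σ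

noncomputable def EE (a : Fin m) (A B : PJet r m → ℝ) (p : PJet r m) : ℝ :=
  ∑' τ : PIdx r, sgn τ * pDmulti τ (fun q => A q * ppd (a, τ) B q) p

def Rep.tset (R : Rep r m f) (a : Fin m) : Finset (PIdx r) :=
  (R.S.filter (fun d => d.1 = a)).image Prod.snd

lemma Rep.tset_spec (R : Rep r m f) {a : Fin m} {τ : PIdx r} (h : τ ∉ R.tset a) :
    ∀ q, ppd (a, τ) f q = 0 := fun q =>
  R.ppd_not_mem (fun hm => h (Finset.mem_image.2
    ⟨(a, τ), Finset.mem_filter.2 ⟨hm, rfl⟩, rfl⟩)) q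

variable {A A' B B' : PJet r m → ℝ} {a : Fin m}

lemma EE_eq_sum (RB : Rep r m B) {T : Finset (PIdx r)} (hT : RB.tset a ⊆ T)
    (A : PJet r m → ℝ) (p : PJet r m) :
    EE a A B p = ∑ τ ∈ T, sgn τ * pDmulti τ (fun q => A q * ppd (a, τ) B q) p := by
  refine tsum_eq_sum fun τ hτ => ?_
  have hz : ∀ q, A q * ppd (a, τ) B q = 0 := fun q => by
    rw [RB.tset_spec (fun hm => hτ (hT hm)) q, mul_zero]
  rw [pDmulti_zero hz, mul_zero]

lemma EE_zeroA (h : ∀ q, A q = 0) (B : PJet r m → ℝ) (p : PJet r m) :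
    EE a A B p = 0 := by
  have : ∀ τ : PIdx r, sgn τ * pDmulti τ (fun q => A q * ppd (a, τ) B q) p = 0 := by
    intro τ
    rw [pDmulti_zero (fun q => by rw [h q, zero_mul]), mul_zero]
  rw [EE, tsum_congr this, tsum_zero]

lemma EE_congr_A (h : ∀ q, A q = A' q) (B : PJet r m → ℝ) (p : PJet r m) :
    EE a A B p = EE a A' B p :=
  tsum_congr fun τ => by rw [pDmulti_congr (fun q => by rw [h q]) τ p]

lemma EE_congr_B (h : ∀ q, B q = B' q) (A : PJet r m → ℝ) (p : PJet r m) :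
    EE a A B p = EE a A B' p :=
  tsum_congr fun τ => by
    rw [pDmulti_congr (fun q => by rw [ppd_congr h (a,τ) q]) τ p]

lemma EE_sum_mul {κ : Type} (T : Finset κ) (k : κ → ℝ) (A : κ → PJet r m → ℝ)
    (hA : ∀ j, J (A j)) (hB : J B) (p : PJet r m) :
    EE a (fun q => ∑ j ∈ T, k j * A j q) B p = ∑ j ∈ T, k j * EE a (A j) B p := by
  classical
  obtain ⟨RB⟩ := hB
  have hC : ∀ τ, J (ppd (a,τ) B) := fun τ => J.ppd ⟨RB⟩ _
  rw [EE_eq_sum RB (le_refl _)]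
  have hterm : ∀ τ ∈ RB.tset a,
      sgn τ * pDmulti τ (fun q => (∑ j ∈ T, k j * A j q) * ppd (a,τ) B q) p
      = ∑ j ∈ T, k j * (sgn τ * pDmulti τ (fun q => A j q * ppd (a,τ) B q) p) := by
    intro τ _
    have h1 : ∀ q, (∑ j ∈ T, k j * A j q) * ppd (a,τ) B q
        = ∑ j ∈ T, k j * (A j q * ppd (a,τ) B q) := by
      intro q
      rw [Finset.sum_mul]
      exact Finset.sum_congr rfl fun j _ => by ring
    rw [pDmulti_congr h1 τ p,
      pDmulti_sum T (fun j => fun q => k j * (A j q * ppd (a,τ) B q))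
        (fun j => (J.const (k j)).mul ((hA j).mul (hC τ))) τ p]
    rw [Finset.mul_sum]
    refine Finset.sum_congr rfl fun j _ => ?_
    rw [pDmulti_const_mul (k j) ((hA j).mul (hC τ)) τ p]
    ring
  rw [Finset.sum_congr rfl hterm, Finset.sum_comm]
  refine Finset.sum_congr rfl fun j _ => ?_
  rw [← Finset.mul_sum, EE_eq_sum RB (le_refl _)]

lemma sub_add_single_cancel {τ : PIdx r} {i : Fin r} (h : 1 ≤ τ i) :
    (τ - Pi.single i 1) + Pi.single i 1 = τ := by
  funext j
  show (τ j - (Pi.single i 1 : PIdx r) j) + (Pi.single i 1 : PIdx r) j = τ j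
  by_cases hji : j = i
  · subst hji; rw [Pi.single_eq_same]; omega
  · rw [Pi.single_eq_of_ne hji]; omega

lemma add_single_sub_cancel (ρ : PIdx r) (i : Fin r) :
    (ρ + Pi.single i 1) - Pi.single i 1 = ρ := by
  funext j
  have h : (ρ + Pi.single i 1 - Pi.single i 1 : PIdx r) j
      = (ρ j + (Pi.single i 1 : PIdx r) j) - (Pi.single i 1 : PIdx r) j := rfl
  rw [h]
  omega

lemma add_single_apply_self (ρ : PIdx r) (i : Fin r) :
    (ρ + Pi.single i 1 : PIdx r) i = ρ i + 1 := by
  show ρ i + (Pi.single i 1 : PIdx r) i = ρ i + 1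
  rw [Pi.single_eq_same]

lemma sgn_add_single (σ : PIdx r) (i : Fin r) : sgn (σ + Pi.single i 1) = -sgn σ := by
  rw [sgn, sgn, pdeg_add_single, pow_succ]
  ring

lemma EE_shift (hA : J A) (hB : J B) (i : Fin r) (p : PJet r m) :
    EE a A (ptotalD i B) p = - EE a (ptotalD i A) B p := by
  classical
  obtain ⟨RB⟩ := hB
  have hC : ∀ τ : PIdx r, J (ppd (a,τ) B) := fun τ => J.ppd ⟨RB⟩ _
  set T0 := RB.tset a with hT0
  set f₁ : PIdx r → ℝ := fun τ =>
    sgn τ * pDmulti τ (fun q => A q * ptotalD i (ppd (a,τ) B) q) p with hf₁def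
  set f₂ : PIdx r → ℝ := fun τ =>
    if 1 ≤ τ i then sgn τ * pDmulti τ (fun q => A q * ppd (a, τ - Pi.single i 1) B q) p
    else 0 with hf₂def
  set g₁ : PIdx r → ℝ := fun τ =>
    sgn τ * pDmulti (τ + Pi.single i 1) (fun q => A q * ppd (a,τ) B q) p with hg₁def
  set g₂ : PIdx r → ℝ := fun τ =>
    sgn τ * pDmulti τ (fun q => ptotalD i A q * ppd (a,τ) B q) p with hg₂def
  have step1 : ∀ τ : PIdx r,
      sgn τ * pDmulti τ (fun q => A q * ppd (a, τ) (ptotalD i B) q) p = f₁ τ + f₂ τ := by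
    intro τ
    have hppd : ∀ q, ppd (a,τ) (ptotalD i B) q
        = ptotalD i (ppd (a,τ) B) q
          + (if 1 ≤ τ i then ppd (a, τ - Pi.single i 1) B q else 0) := fun q =>
      ppd_ptotalD ⟨RB⟩ (a,τ) i q
    by_cases hi : 1 ≤ τ i
    · have h1 : ∀ q, A q * ppd (a,τ) (ptotalD i B) q
          = A q * ptotalD i (ppd (a,τ) B) q + A q * ppd (a, τ - Pi.single i 1) B q := by
        intro q
        rw [hppd q, if_pos hi]
        ring
      rw [pDmulti_congr h1 τ p,
        pDmulti_add (hA.mul ((hC τ).D i)) (hA.mul (hC _)) τ p]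
      rw [hf₁def, hf₂def]
      simp only [if_pos hi]
      ring
    · have h1 : ∀ q, A q * ppd (a,τ) (ptotalD i B) q
          = A q * ptotalD i (ppd (a,τ) B) q := by
        intro q
        rw [hppd q, if_neg hi]
        ring
      rw [pDmulti_congr h1 τ p, hf₁def, hf₂def]
      simp only [if_neg hi]
      ring
  have step2 : ∀ τ : PIdx r, f₁ τ = g₁ τ - g₂ τ := by
    intro τ
    have hLeib : ∀ q, A q * ptotalD i (ppd (a,τ) B) q
        = ptotalD i (fun q' => A q' * ppd (a,τ) B q') q
          - ptotalD i A q * ppd (a,τ) B q := by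
      intro q
      rw [ptotalD_mul hA (hC τ) i q]
      ring
    rw [hf₁def]
    simp only
    rw [pDmulti_congr hLeib τ p,
      pDmulti_sub ((hA.mul (hC τ)).D i) ((hA.D i).mul (hC τ)) τ p]
    have h3 : pDmulti τ (ptotalD i (fun q' => A q' * ppd (a,τ) B q')) p
        = pDmulti (τ + Pi.single i 1) (fun q => A q * ppd (a,τ) B q) p := by
      rw [pDmulti_comm (hA.mul (hC τ)) τ i p,
        ← pDmulti_add_single (hA.mul (hC τ)) τ i p]
    rw [h3, hg₁def, hg₂def]
    ring
  have hsupp₁ : ∀ τ ∉ T0, f₁ τ = 0 := by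
    intro τ hτ
    have hz : ∀ q, A q * ptotalD i (ppd (a,τ) B) q = 0 := fun q => by
      rw [ptotalD_zero (RB.tset_spec hτ) i q, mul_zero]
    rw [hf₁def]
    simp only
    rw [pDmulti_zero hz, mul_zero]
  have hsuppg₁ : ∀ τ ∉ T0, g₁ τ = 0 := by
    intro τ hτ
    have hz : ∀ q, A q * ppd (a,τ) B q = 0 := fun q => by
      rw [RB.tset_spec hτ q, mul_zero]
    rw [hg₁def]
    simp only
    rw [pDmulti_zero hz, mul_zero]
  have hsuppg₂ : ∀ τ ∉ T0, g₂ τ = 0 := by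
    intro τ hτ
    have hz : ∀ q, ptotalD i A q * ppd (a,τ) B q = 0 := fun q => by
      rw [RB.tset_spec hτ q, mul_zero]
    rw [hg₂def]
    simp only
    rw [pDmulti_zero hz, mul_zero]
  have hsupp₂ : ∀ τ ∉ T0.image (fun ρ => ρ + Pi.single i 1), f₂ τ = 0 := by
    intro τ hτ
    rw [hf₂def]
    simp only
    by_cases hi : 1 ≤ τ i
    · rw [if_pos hi]
      have hmem : τ - Pi.single i 1 ∉ T0 := by
        intro hm
        exact hτ (Finset.mem_image.2 ⟨_, hm, sub_add_single_cancel hi⟩)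
      have hz : ∀ q, A q * ppd (a, τ - Pi.single i 1) B q = 0 := fun q => by
        rw [RB.tset_spec hmem q, mul_zero]
      rw [pDmulti_zero hz, mul_zero]
    · rw [if_neg hi]
  have hinj : Function.Injective (fun ρ : PIdx r => ρ + Pi.single i 1) := by
    intro ρ₁ ρ₂ h
    funext j
    have := congrFun h j
    simp only [Pi.add_apply] at this
    omega
  have hs₁ : Summable f₁ := summable_of_ne_finset_zero hsupp₁
  have hs₂ : Summable f₂ := summable_of_ne_finset_zero hsupp₂
  have hsg₁ : Summable g₁ := summable_of_ne_finset_zero hsuppg₁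
  have hsg₂ : Summable g₂ := summable_of_ne_finset_zero hsuppg₂
  have hEE1 : EE a A (ptotalD i B) p = (∑' τ, f₁ τ) + (∑' τ, f₂ τ) := by
    rw [EE, tsum_congr step1]
    exact hs₁.tsum_add hs₂
  have hEEf₁ : (∑' τ, f₁ τ) = (∑' τ, g₁ τ) - (∑' τ, g₂ τ) := by
    rw [tsum_congr step2]
    exact hsg₁.tsum_sub hsg₂
  have hEEf₂ : (∑' τ, f₂ τ) = - (∑' τ, g₁ τ) := by
    have hrange : Function.support f₂ ⊆ Set.range (fun ρ : PIdx r => ρ + Pi.single i 1) := by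
      intro τ hτ
      by_cases hi : 1 ≤ τ i
      · exact ⟨τ - Pi.single i 1, sub_add_single_cancel hi⟩
      · exfalso
        apply hτ
        rw [hf₂def]
        simp only
        rw [if_neg hi]
    have heq := hinj.tsum_eq (f := f₂) hrange
    rw [← heq]
    have hval : ∀ ρ : PIdx r, f₂ (ρ + Pi.single i 1) = - g₁ ρ := by
      intro ρ
      rw [hf₂def, hg₁def]
      simp only
      rw [if_pos (by rw [add_single_apply_self]; omega), add_single_sub_cancel,
        sgn_add_single]
      ring
    rw [tsum_congr hval, tsum_neg]
  have hEEg₂ : (∑' τ, g₂ τ) = EE a (ptotalD i A) B p := rfl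
  rw [hEE1, hEEf₁, hEEf₂, hEEg₂]
  ring

lemma EE_Dmulti (hB : J B) : ∀ (nn : ℕ) (σ : PIdx r), pdeg σ = nn →
    ∀ (A : PJet r m → ℝ), J A → ∀ p : PJet r m,
      EE a A (pDmulti σ B) p = (-1) ^ pdeg σ * EE a (pDmulti σ A) B p := by
  intro nn
  induction nn with
  | zero =>
    intro σ hσ A hA p
    have hσ0 : σ = 0 := by
      funext j
      have := (Finset.sum_eq_zero_iff.1 hσ) j (Finset.mem_univ j)
      simpa using this
    subst hσ0
    rw [EE_congr_B (fun q => pDmulti_zero_idx B q) A p]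
    rw [EE_congr_A (fun q => pDmulti_zero_idx A q) B p]
    simp [pdeg]
  | succ nn ih =>
    intro σ hσ A hA p
    have hne : ∃ i, σ i ≠ 0 := by
      by_contra h
      push_neg at h
      have : pdeg σ = 0 := Finset.sum_eq_zero fun j _ => h j
      omega
    obtain ⟨i, hi⟩ := hne
    have hi1 : 1 ≤ σ i := Nat.one_le_iff_ne_zero.2 hi
    set σ' : PIdx r := σ - Pi.single i 1 with hσ'
    have hσeq : σ = σ' + Pi.single i 1 := (sub_add_single_cancel hi1).symm
    have hdeg' : pdeg σ' = nn := by
      have := pdeg_add_single σ' i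
      rw [← hσeq] at this
      omega
    have h1 : EE a A (pDmulti σ B) p = EE a A (ptotalD i (pDmulti σ' B)) p := by
      refine EE_congr_B (fun q => ?_) A p
      rw [hσeq]
      exact pDmulti_add_single hB σ' i q
    rw [h1, EE_shift hA (hB.Dmulti σ') i p,
      ih σ' hdeg' (ptotalD i A) (hA.D i) p]
    have h2 : EE a (pDmulti σ' (ptotalD i A)) B p = EE a (pDmulti σ A) B p := by
      refine EE_congr_A (fun q => ?_) B p
      rw [pDmulti_comm hA σ' i q, ← pDmulti_add_single hA σ' i q, ← hσeq]
    rw [h2, hσ, hdeg']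
    ring

/-! ### chain rule -/

lemma clm_pi_apply {ι₀ : Type} [Fintype ι₀] [DecidableEq ι₀]
    (L : (ι₀ → ℝ) →L[ℝ] ℝ) (v : ι₀ → ℝ) :
    L v = ∑ k, v k * L (Pi.single k 1) := by
  have h2 : ∀ k, (Pi.single k (v k) : ι₀ → ℝ) = v k • (Pi.single k 1 : ι₀ → ℝ) := by
    intro k
    funext j
    by_cases hj : j = k
    · subst hj; simp
    · simp [Pi.single_eq_of_ne hj]
  calc L v = L (∑ k, Pi.single k (v k)) := by rw [Finset.univ_sum_single]
    _ = ∑ k, L (Pi.single k (v k)) := map_sum L _ _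
    _ = ∑ k, v k * L (Pi.single k 1) := Finset.sum_congr rfl fun k _ => by
          rw [h2 k, map_smul, smul_eq_mul]

section Comp

variable {ι₀ : Type} [Fintype ι₀] [DecidableEq ι₀] {Φ : (ι₀ → ℝ) → ℝ}
  {g : ι₀ → PJet r m → ℝ}

lemma ppd_comp (hΦ : ContDiff ℝ (⊤ : ℕ∞) Φ) (hg : ∀ k, J (g k)) (c0 : Fin m × PIdx r)
    (p : PJet r m) :
    ppd c0 (fun p => Φ fun k => g k p) p
    = ∑ k, fderiv ℝ Φ (fun k => g k p) (Pi.single k 1) * ppd c0 (g k) p := by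
  have hin : HasDerivAt (fun t => fun k => g k (Function.update p c0 t))
      (fun k => ppd c0 (g k) p) (p c0) :=
    hasDerivAt_pi.2 fun k => (hg k).hasDerivAt p c0
  have hx : (fun k => g k (Function.update p c0 (p c0))) = fun k => g k p := by
    rw [Function.update_eq_self]
  have hΦ' : HasFDerivAt Φ (fderiv ℝ Φ (fun k => g k p))
      ((fun t => fun k => g k (Function.update p c0 t)) (p c0)) := by
    rw [show (fun t => fun k => g k (Function.update p c0 t)) (p c0)
      = fun k => g k p from hx]
    exact (hΦ.differentiable (by simp) _).hasFDerivAt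
  have hout := hΦ'.comp_hasDerivAt (p c0) hin
  have hder : ppd c0 (fun p => Φ fun k => g k p) p
      = fderiv ℝ Φ (fun k => g k p) (fun k => ppd c0 (g k) p) := hout.deriv
  rw [hder, clm_pi_apply]
  exact Finset.sum_congr rfl fun k _ => by ring

lemma ptotalD_comp (hΦ : ContDiff ℝ (⊤ : ℕ∞) Φ) (hg : ∀ k, J (g k)) (i : Fin r)
    (p : PJet r m) :
    ptotalD i (fun p => Φ fun k => g k p) p
    = ∑ k, fderiv ℝ Φ (fun k => g k p) (Pi.single k 1) * ptotalD i (g k) p := by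
  classical
  set Rk := fun k => (hg k).some with hRk
  set Sbig := Finset.univ.biUnion (fun k => (Rk k).S) with hSbig
  have hsupp : ∀ c0 ∉ Sbig,
      p (c0.1, c0.2 + Pi.single i 1) * ppd c0 (fun p => Φ fun k => g k p) p = 0 := by
    intro c0 hc
    rw [ppd_comp hΦ hg c0 p]
    have hz : ∀ k ∈ Finset.univ,
        fderiv ℝ Φ (fun k => g k p) (Pi.single k 1) * ppd c0 (g k) p = 0 := by
      intro k _
      rw [(Rk k).ppd_not_mem
        (fun hm => hc (Finset.mem_biUnion.2 ⟨k, Finset.mem_univ k, hm⟩)) p, mul_zero]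
    rw [Finset.sum_congr rfl hz]
    simp
  rw [ptotalD, tsum_eq_sum hsupp]
  have hterm : ∀ c0 ∈ Sbig,
      p (c0.1, c0.2 + Pi.single i 1) * ppd c0 (fun p => Φ fun k => g k p) p
      = ∑ k, fderiv ℝ Φ (fun k => g k p) (Pi.single k 1)
          * (p (c0.1, c0.2 + Pi.single i 1) * ppd c0 (g k) p) := by
    intro c0 _
    rw [ppd_comp hΦ hg c0 p, Finset.mul_sum]
    exact Finset.sum_congr rfl fun k _ => by ring
  rw [Finset.sum_congr rfl hterm, Finset.sum_comm]
  refine Finset.sum_congr rfl fun k _ => ?_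
  rw [← Finset.mul_sum,
    ← ptotalD_eq_sum (Rk k) (Finset.subset_biUnion_of_mem (fun k => (Rk k).S)
      (Finset.mem_univ k)) i p]

end Comp

/-! ### pullback along prolongation -/

section Pr

variable {n : ℕ}

noncomputable def prc (Fm : Fin n → PJet r m → ℝ) (p : PJet r m) : PJet r n :=
  fun d => pDmulti d.2 (Fm d.1) p

variable {Fm : Fin n → PJet r m → ℝ} {G : PJet r n → ℝ}

lemma ptotalD_pr (hFm : ∀ μ, J (Fm μ)) (RG : Rep r n G) (i : Fin r) (p : PJet r m) :
    ptotalD i (fun p => G (prc Fm p)) p = ptotalD i G (prc Fm p) := by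
  classical
  set g : RG.ι → PJet r m → ℝ := fun j => pDmulti (RG.c j).2 (Fm (RG.c j).1) with hg
  have hgJ : ∀ j, J (g j) := fun j => (hFm _).Dmulti _
  have hcomp : ∀ p', (fun p => G (prc Fm p)) p' = RG.F fun j => g j p' :=
    fun p' => RG.eq (prc Fm p')
  rw [ptotalD_congr hcomp i p, ptotalD_comp RG.smooth hgJ i p]
  have hD : ∀ j, ptotalD i (g j) p
      = prc Fm p ((RG.c j).1, (RG.c j).2 + Pi.single i 1) := by
    intro j
    rw [hg]
    exact (pDmulti_add_single (hFm _) (RG.c j).2 i p).symm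
  rw [ptotalD_eq_sum RG (le_refl _) i (prc Fm p)]
  have hterm : ∀ c0 ∈ RG.S,
      prc Fm p (c0.1, c0.2 + Pi.single i 1) * ppd c0 G (prc Fm p)
      = ∑ j ∈ Finset.univ.filter (fun j => RG.c j = c0),
          fderiv ℝ RG.F (fun j => g j p) (Pi.single j 1) * ptotalD i (g j) p := by
    intro c0 _
    have hx0 : RG.x0 (prc Fm p) = fun j => g j p := rfl
    rw [RG.ppd_eq_sum_filter c0 (prc Fm p), hx0, Finset.mul_sum]
    refine Finset.sum_congr rfl fun j hj => ?_
    simp only [Finset.mem_filter] at hj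
    rw [hD j, hj.2]
    ring
  rw [Finset.sum_congr rfl hterm]
  exact (Finset.sum_fiberwise_of_maps_to (fun j _ => RG.mem_S j)
    (fun j => fderiv ℝ RG.F (fun j => g j p) (Pi.single j 1) * ptotalD i (g j) p)).symm

lemma iter_pr (hFm : ∀ μ, J (Fm μ)) (hG : J G) (i : Fin r) :
    ∀ k q, (ptotalD i)^[k] (fun p => G (prc Fm p)) q = (ptotalD i)^[k] G (prc Fm q)
  | 0, q => rfl
  | (k+1), q => by
    rw [Function.iterate_succ_apply', Function.iterate_succ_apply']
    rw [ptotalD_congr (iter_pr hFm hG i k) i q]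
    exact ptotalD_pr hFm ((hG.iterD i k).some) i q

lemma Dfold_pr (hFm : ∀ μ, J (Fm μ)) (hG : J G) (σ : PIdx r) :
    ∀ (L : List (Fin r)) q,
      Dfold σ L (fun p => G (prc Fm p)) q = Dfold σ L G (prc Fm q)
  | [], q => rfl
  | (a :: L), q => by
    have h1 := iter_congr (Dfold_pr hFm hG σ L) a (σ a) q
    rw [show Dfold σ (a :: L) (fun p => G (prc Fm p)) q
      = (ptotalD a)^[σ a] (Dfold σ L (fun p => G (prc Fm p))) q from rfl, h1]
    exact iter_pr hFm (hG.Dfold σ L) a (σ a) q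

lemma pDmulti_pr (hFm : ∀ μ, J (Fm μ)) (hG : J G) (σ : PIdx r) (q : PJet r m) :
    pDmulti σ (fun p => G (prc Fm p)) q = pDmulti σ G (prc Fm q) :=
  Dfold_pr hFm hG σ _ q

end Pr

/-! ### main assembly -/

lemma varder_of_dbar {L : PJet r m → ℝ} (hclosed : ∀ p : PJet (r+1) m, dbar L p = 0)
    (μ : Fin m) (q' : PJet r m) : varder μ L q' = 0 := by
  classical
  set p : PJet (r+1) m := fun d =>
    if d.2 (Fin.last r) = 0 then q' (d.1, fun j => d.2 j.castSucc)
    else if d.1 = μ then 1 else 0 with hp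
  have h0 := hclosed p
  rw [dbar] at h0
  have hlift : ∀ b, plift (fun q => varder b L q) p = varder b L q' := by
    intro b
    show varder b L (fun c => p (c.1, Fin.snoc c.2 0)) = varder b L q'
    congr 1
    funext c
    rw [hp]
    simp only
    rw [if_pos (by rw [Fin.snoc_last])]
    congr 1
    rw [Prod.ext_iff]
    refine ⟨rfl, ?_⟩
    funext j
    simp [Fin.snoc_castSucc]
  have hcoef : ∀ b, p (b, Pi.single (Fin.last r) 1) = if b = μ then 1 else 0 := by
    intro b
    rw [hp]
    simp only
    rw [if_neg (by rw [Pi.single_eq_same]; omega)]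
  have h1 : ∀ b ∈ Finset.univ,
      p (b, Pi.single (Fin.last r) 1) * plift (fun q => varder b L q) p
      = if b = μ then varder b L q' else 0 := by
    intro b _
    rw [hcoef b, hlift b]
    by_cases hb : b = μ
    · rw [if_pos hb, if_pos hb, one_mul]
    · rw [if_neg hb, if_neg hb, zero_mul]
  rw [Finset.sum_congr rfl h1, Finset.sum_ite_eq' Finset.univ μ] at h0
  simpa using h0

lemma varder_compLag {n : ℕ} {L : PJet r n → ℝ} (RL : Rep r n L)
    {Fm : Fin n → PJet r m → ℝ} (hFm : ∀ μ, J (Fm μ))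
    (hvar : ∀ μ q', varder μ L q' = 0) (a : Fin m) (p : PJet r m) :
    varder a (compLag L Fm) p = 0 := by
  classical
  set g : RL.ι → PJet r m → ℝ := fun j => pDmulti (RL.c j).2 (Fm (RL.c j).1) with hgdef
  have hgJ : ∀ j, J (g j) := fun j => (hFm _).Dmulti _
  set A : RL.ι → PJet r m → ℝ := fun j => fun q =>
    fderiv ℝ RL.F (fun k => g k q) (Pi.single j 1) with hAdef
  have hAJ : ∀ j, J (A j) := by
    intro j
    have hΨ : ContDiff ℝ (⊤ : ℕ∞) (fun x : RL.ι → ℝ => fderiv ℝ RL.F x (Pi.single j 1)) :=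
      (RL.smooth.fderiv_right (by simp)).clm_apply contDiff_const
    exact J.comp hΨ hgJ
  have hcomp : ∀ q, compLag L Fm q = RL.F (fun k => g k q) := fun q => RL.eq (prc Fm q)
  set Rg := fun j => (hgJ j).some with hRg
  set Tbig := Finset.univ.biUnion (fun j => (Rg j).tset a) with hTbig
  have hppdh : ∀ (τ : PIdx r) (q : PJet r m), ppd (a,τ) (compLag L Fm) q
      = ∑ j, A j q * ppd (a,τ) (g j) q := by
    intro τ q
    rw [ppd_congr hcomp (a,τ) q, ppd_comp RL.smooth hgJ (a,τ) q]
  have hsupp : ∀ τ ∉ Tbig,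
      (-1:ℝ)^(pdeg τ) * pDmulti τ (ppd (a,τ) (compLag L Fm)) p = 0 := by
    intro τ hτ
    have hz : ∀ q, ppd (a,τ) (compLag L Fm) q = 0 := by
      intro q
      rw [hppdh τ q]
      refine Finset.sum_eq_zero fun j _ => ?_
      rw [(Rg j).tset_spec
        (fun hm => hτ (Finset.mem_biUnion.2 ⟨j, Finset.mem_univ j, hm⟩)) q, mul_zero]
    rw [pDmulti_zero hz, mul_zero]
  rw [varder, tsum_eq_sum hsupp]
  have h1 : ∀ τ ∈ Tbig, (-1:ℝ)^(pdeg τ) * pDmulti τ (ppd (a,τ) (compLag L Fm)) p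
      = ∑ j, sgn τ * pDmulti τ (fun q => A j q * ppd (a,τ) (g j) q) p := by
    intro τ _
    rw [pDmulti_congr (hppdh τ) τ p,
      pDmulti_sum Finset.univ (fun j => fun q => A j q * ppd (a,τ) (g j) q)
        (fun j => (hAJ j).mul (J.ppd ⟨Rg j⟩ _)) τ p, Finset.mul_sum]
    exact Finset.sum_congr rfl fun i _ => by rw [sgn]
  rw [Finset.sum_congr rfl h1, Finset.sum_comm]
  have h2 : ∀ j ∈ Finset.univ,
      (∑ τ ∈ Tbig, sgn τ * pDmulti τ (fun q => A j q * ppd (a,τ) (g j) q) p)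
      = EE a (A j) (g j) p := fun j _ =>
    (EE_eq_sum (Rg j)
      (Finset.subset_biUnion_of_mem (fun j => (Rg j).tset a) (Finset.mem_univ j))
      (A j) p).symm
  rw [Finset.sum_congr rfl h2]
  have h3 : ∀ j ∈ Finset.univ, EE a (A j) (g j) p
      = (-1:ℝ)^(pdeg (RL.c j).2) * EE a (pDmulti (RL.c j).2 (A j)) (Fm (RL.c j).1) p := by
    intro j _
    have := EE_Dmulti (a := a) (hFm (RL.c j).1) (pdeg (RL.c j).2) (RL.c j).2 rfl
      (A j) (hAJ j) p
    rw [hgdef]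
    exact this
  rw [Finset.sum_congr rfl h3]
  rw [← Finset.sum_fiberwise Finset.univ (fun j => (RL.c j).1)
    (fun j => (-1:ℝ)^(pdeg (RL.c j).2) * EE a (pDmulti (RL.c j).2 (A j)) (Fm (RL.c j).1) p)]
  refine Finset.sum_eq_zero fun μ _ => ?_
  set Tμ := Finset.univ.filter (fun j => (RL.c j).1 = μ) with hTμ
  have h4 : ∀ j ∈ Tμ,
      (-1:ℝ)^(pdeg (RL.c j).2) * EE a (pDmulti (RL.c j).2 (A j)) (Fm (RL.c j).1) p
      = (-1:ℝ)^(pdeg (RL.c j).2) * EE a (pDmulti (RL.c j).2 (A j)) (Fm μ) p := by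
    intro j hj
    rw [hTμ] at hj
    simp only [Finset.mem_filter] at hj
    rw [hj.2]
  rw [Finset.sum_congr rfl h4]
  have h5 : (∑ j ∈ Tμ, (-1:ℝ)^(pdeg (RL.c j).2)
        * EE a (pDmulti (RL.c j).2 (A j)) (Fm μ) p)
      = EE a (fun q => ∑ j ∈ Tμ,
          (-1:ℝ)^(pdeg (RL.c j).2) * pDmulti (RL.c j).2 (A j) q) (Fm μ) p :=
    (EE_sum_mul Tμ (fun j => (-1:ℝ)^(pdeg (RL.c j).2))
      (fun j => pDmulti (RL.c j).2 (A j))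
      (fun j => (hAJ j).Dmulti _) (hFm μ) p).symm
  rw [h5]
  refine EE_zeroA (fun q => ?_) (Fm μ) p
  have hvq := hvar μ (prc Fm q)
  rw [varder] at hvq
  have hsup2 : ∀ σ ∉ RL.tset μ,
      (-1:ℝ)^(pdeg σ) * pDmulti σ (ppd (μ,σ) L) (prc Fm q) = 0 := by
    intro σ hσ
    rw [pDmulti_zero (RL.tset_spec hσ), mul_zero]
  rw [tsum_eq_sum hsup2] at hvq
  have hfilt : ∀ σ : PIdx r, Finset.univ.filter (fun j => RL.c j = (μ, σ))
      = Tμ.filter (fun j => (RL.c j).2 = σ) := by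
    intro σ
    ext j
    rw [hTμ]
    simp only [Finset.mem_filter, Finset.mem_univ, true_and, Prod.ext_iff]
  have h6 : ∀ σ ∈ RL.tset μ, (-1:ℝ)^(pdeg σ) * pDmulti σ (ppd (μ,σ) L) (prc Fm q)
      = ∑ j ∈ Tμ.filter (fun j => (RL.c j).2 = σ),
          (-1:ℝ)^(pdeg (RL.c j).2) * pDmulti (RL.c j).2 (A j) q := by
    intro σ _
    have hpr : pDmulti σ (ppd (μ,σ) L) (prc Fm q)
        = pDmulti σ (fun p' => ppd (μ,σ) L (prc Fm p')) q :=
      (pDmulti_pr hFm (J.ppd ⟨RL⟩ (μ,σ)) σ q).symm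
    have hADecomp : ∀ p', ppd (μ,σ) L (prc Fm p')
        = ∑ j ∈ Finset.univ.filter (fun j => RL.c j = (μ, σ)), A j p' := by
      intro p'
      rw [RL.ppd_eq_sum_filter (μ,σ) (prc Fm p')]
      exact Finset.sum_congr rfl fun j _ => rfl
    rw [hpr, pDmulti_congr hADecomp σ q,
      pDmulti_sum (Finset.univ.filter (fun j => RL.c j = (μ, σ)))
        (fun j => A j) (fun j => hAJ j) σ q, hfilt σ, Finset.mul_sum]
    refine Finset.sum_congr rfl fun j hj => ?_
    simp only [Finset.mem_filter] at hj
    rw [hj.2]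
  rw [Finset.sum_congr rfl h6] at hvq
  have hmaps : ∀ j ∈ Tμ, (RL.c j).2 ∈ RL.tset μ := by
    intro j hj
    rw [hTμ] at hj
    simp only [Finset.mem_filter, Finset.mem_univ, true_and] at hj
    exact Finset.mem_image.2 ⟨RL.c j, Finset.mem_filter.2 ⟨RL.mem_S j, hj⟩, rfl⟩
  rw [Finset.sum_fiberwise_of_maps_to hmaps
    (fun j => (-1:ℝ)^(pdeg (RL.c j).2) * pDmulti (RL.c j).2 (A j) q)] at hvq
  exact hvq

end JetPf

/-- closedness is preserved under composition of Lagrangians: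
if `d̄L = 0` then `d̄(L ∘ F) = 0`. -/
theorem dbar_compLag {r m n : ℕ} (L : PJet r n → ℝ) (hL : IsPJetFun L)
    (F : Fin n → PJet r m → ℝ) (hF : ∀ μ, IsPJetFun (F μ))
    (hclosed : ∀ p : PJet (r + 1) n, dbar L p = 0) :
    ∀ q : PJet (r + 1) m, dbar (compLag L F) q = 0 := by
  intro q
  obtain ⟨N, cL, FL, hFL, heqL⟩ := hL
  have RL : JetPf.Rep r n L := ⟨Fin N, inferInstance, inferInstance, cL, FL, hFL, heqL⟩
  have hFmJ : ∀ μ, JetPf.J (F μ) := fun μ => by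
    obtain ⟨N', c', F', hF', heq'⟩ := hF μ
    exact ⟨⟨Fin N', inferInstance, inferInstance, c', F', hF', heq'⟩⟩
  have hvar : ∀ μ q', varder μ L q' = 0 := fun μ q' =>
    JetPf.varder_of_dbar hclosed μ q'
  have hvc : ∀ (a : Fin m) (p : PJet r m), varder a (compLag L F) p = 0 :=
    JetPf.varder_compLag RL hFmJ hvar
  rw [dbar]
  refine Finset.sum_eq_zero fun a _ => ?_
  rw [show plift (fun q' => varder a (compLag L F) q') q
    = varder a (compLag L F) (fun c => q (c.1, Fin.snoc c.2 0)) from rfl]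
  rw [hvc, mul_zero]
end

section
/- The Gauss curvature integrand of a surface in R^m as a composed Lagrangian: define on jets of maps R^2 → R^m the function L = Σ_{a,b} (x^a_{11} x^b_{22} − x^a_{12} x^b_{12}) P^{ab} / √(det g), where g_{ij} = Σ_a x^a_i x^a_j is assumed positive definite and P^{ab} = δ^{ab} − x^a_i g^{ij} x^b_j is the normal projector. Then L is a covariant 2-Lagrangian of weight 1 in the infinitesimal sense: for every pair of indices i, j ∈ {1,2}, x^a_i ∂L/∂x^a_j + 2 x^a_{ik} ∂L/∂x^a_{jk} = δ^j_i L (summation over a, k). -/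
open scoped BigOperators

/-- Second-order jets of maps `ℝ² → ℝ^m` (the zeroth-order coordinates `x^a`
are irrelevant for the Lagrangian below): first derivatives `x^a_i` and second
derivatives `x^a_{ij}` (recorded with both orders of `(i,j)`; the geometric
points are the symmetric ones `x^a_{ij} = x^a_{ji}`). -/
abbrev Jet2 (m : ℕ) := (Fin 2 → Fin m → ℝ) × (Fin 2 → Fin 2 → Fin m → ℝ)

/-- Partial derivative with respect to the first-order variable `x^a_i`. -/
noncomputable def pdU {m : ℕ} (i : Fin 2) (a : Fin m) (L : Jet2 m → ℝ)
    (p : Jet2 m) : ℝ :=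
  deriv (fun t =>
    L (fun i' a' => if i' = i ∧ a' = a then t else p.1 i' a', p.2)) (p.1 i a)

/-- Partial derivative with respect to the second-order variable `x^a_{ij}`. -/
noncomputable def pdW {m : ℕ} (i j : Fin 2) (a : Fin m) (L : Jet2 m → ℝ)
    (p : Jet2 m) : ℝ :=
  deriv (fun t =>
    L (p.1, fun i' j' a' =>
        if i' = i ∧ j' = j ∧ a' = a then t else p.2 i' j' a')) (p.2 i j a)

/-- The induced metric `g_{ij} = Σ_a x^a_i x^a_j`. -/
noncomputable def gMat {m : ℕ} (p : Jet2 m) : Matrix (Fin 2) (Fin 2) ℝ :=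
  Matrix.of fun i j => ∑ a, p.1 i a * p.1 j a

/-- The symmetrized second derivatives. -/
noncomputable def wSym {m : ℕ} (p : Jet2 m) (a : Fin m) (i j : Fin 2) : ℝ :=
  (p.2 i j a + p.2 j i a) / 2

/-- The projector `P^{ab} = δ^{ab} − x^a_i g^{ij} x^b_j` onto the normal plane. -/
noncomputable def normProj {m : ℕ} (p : Jet2 m) (a b : Fin m) : ℝ :=
  (if a = b then 1 else 0) -
    ∑ i, ∑ j, p.1 i a * (gMat p)⁻¹ i j * p.1 j b

/-- The Gauss curvature integrand
`L = Σ_{a,b} (x^a_{11} x^b_{22} − x^a_{12} x^b_{12}) P^{ab} / √(det g)`. -/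
noncomputable def gaussL {m : ℕ} (p : Jet2 m) : ℝ :=
  (∑ a, ∑ b,
    (wSym p a 0 0 * wSym p b 1 1 - wSym p a 0 1 * wSym p b 0 1) * normProj p a b)
    / Real.sqrt (gMat p).det

/-!
A linear reparametrization `A ∈ GL(2)` acts on jets by `x_k ↦ A_{kl} x_l`,
`x_{kl} ↦ A_{kr} A_{ls} x_{rs}`. Then `g ↦ A g Aᵀ`, the normal projector `P` is unchanged, and the
numerator of `L`, which (`P` being symmetric) is half the pairing of `P` with the polarized
determinant of the Hessians, picks up `det A ^ 2`; hence `L (A·p) = |det A| L p`. Differentiating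
along `A = 1 + t E` at `t = 0`, with `d/dt det (1 + t E) = tr E`, gives `dL (E·p) = tr E · L p`;
for `E` the elementary matrix `E_{ji}` the left side is the displayed expression and
`tr E = δ^j_i`.
-/

open Matrix Filter Topology

section MatrixCalculus

variable {n E : Type*} [Fintype n] [DecidableEq n] [NormedAddCommGroup E] [NormedSpace ℝ E]
  {M : E → Matrix n n ℝ} {x : E}

theorem DifferentiableAt.matrix_det (hM : ∀ i j, DifferentiableAt ℝ (fun y => M y i j) x) :
    DifferentiableAt ℝ (fun y => (M y).det) x := by
  simp only [det_apply, Units.smul_def, zsmul_eq_mul]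
  exact DifferentiableAt.fun_sum fun σ _ =>
    (differentiableAt_const _).mul
      (HasFDerivAt.finsetProd fun i _ => (hM (σ i) i).hasFDerivAt).differentiableAt

theorem DifferentiableAt.matrix_inv_apply (hM : ∀ i j, DifferentiableAt ℝ (fun y => M y i j) x)
    (hdet : (M x).det ≠ 0) (i j : n) :
    DifferentiableAt ℝ (fun y => (M y)⁻¹ i j) x := by
  simp only [inv_def, Ring.inverse_eq_inv', Matrix.smul_apply, smul_eq_mul]
  simp_rw [adjugate_apply]
  refine ((DifferentiableAt.matrix_det hM).inv hdet).mul (DifferentiableAt.matrix_det ?_)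
  intro k l
  simp only [updateRow_apply]
  split_ifs
  · exact differentiableAt_const _
  · exact hM k l

end MatrixCalculus

theorem hasDerivAt_det_one_add_smul {n : Type*} [Fintype n] [DecidableEq n]
    (M : Matrix n n ℝ) : HasDerivAt (fun t : ℝ => (1 + t • M).det) M.trace 0 := by
  rw [funext fun t : ℝ => det_one_add_smul t M]
  set q := (det (1 + (Polynomial.X : Polynomial ℝ) • M.map Polynomial.C)).divX.divX
  have h := (((hasDerivAt_id (0 : ℝ)).const_mul M.trace).const_add 1).fun_add
    ((q.hasDerivAt 0).fun_mul (hasDerivAt_pow 2 (0 : ℝ)))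
  simpa using h

theorem HasFDerivAt.deriv_add_sub_smul {E F : Type*} [NormedAddCommGroup E] [NormedSpace ℝ E]
    [NormedAddCommGroup F] [NormedSpace ℝ F] {f : E → F} {D : E →L[ℝ] F} {x : E}
    (hf : HasFDerivAt f D x) (c : ℝ) (v : E) :
    deriv (fun t : ℝ => f (x + (t - c) • v)) c = D v := by
  have hpath : HasDerivAt (fun t : ℝ => x + (t - c) • v) v c := by
    simpa using (((hasDerivAt_id c).sub_const c).smul_const v).const_add x
  have hf' : HasFDerivAt f D (x + (c - c) • v) := by simpa using hf
  exact (hf'.comp_hasDerivAt c hpath).deriv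

section Polarization

variable {n R : Type*} [Fintype n] [DecidableEq n] [CommRing R]

def polarDet (S T : Matrix n n R) : R :=
  (S + T).det - S.det - T.det

theorem polarDet_conj (A S T : Matrix n n R) :
    polarDet (A * S * Aᵀ) (A * T * Aᵀ) = A.det ^ 2 * polarDet S T := by
  simp only [polarDet, ← Matrix.add_mul, ← Matrix.mul_add, det_mul, det_transpose]
  ring

theorem transpose_mul_inv_conj_mul {A : Matrix n n R} (hA : IsUnit A.det) (G : Matrix n n R) :
    Aᵀ * (A * G * Aᵀ)⁻¹ * A = G⁻¹ := by
  have hAT : IsUnit Aᵀ.det := by rwa [det_transpose]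
  rw [Matrix.mul_inv_rev, Matrix.mul_inv_rev]
  calc Aᵀ * (Aᵀ⁻¹ * (G⁻¹ * A⁻¹)) * A = (Aᵀ * Aᵀ⁻¹) * G⁻¹ * (A⁻¹ * A) := by
        simp only [Matrix.mul_assoc]
    _ = G⁻¹ := by rw [mul_nonsing_inv _ hAT, nonsing_inv_mul _ hA, Matrix.one_mul, Matrix.mul_one]

end Polarization

section Jets

variable {m : ℕ}

noncomputable def jetAct (A : Matrix (Fin 2) (Fin 2) ℝ) (p : Jet2 m) : Jet2 m :=
  (fun k a => ∑ l, A k l * p.1 l a, fun k l a => ∑ r, ∑ s, A k r * A l s * p.2 r s a)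

theorem gMat_eq_mul_transpose (p : Jet2 m) : gMat p = of p.1 * (of p.1)ᵀ := by
  ext i j
  simp [gMat, mul_apply]

theorem gMat_isSymm (p : Jet2 m) : (gMat p).IsSymm := by
  rw [gMat_eq_mul_transpose, IsSymm, transpose_mul, transpose_transpose]

theorem of_jetAct_fst (A : Matrix (Fin 2) (Fin 2) ℝ) (p : Jet2 m) :
    of (jetAct A p).1 = A * of p.1 := by
  ext k a
  simp [jetAct, mul_apply]

theorem gMat_jetAct (A : Matrix (Fin 2) (Fin 2) ℝ) (p : Jet2 m) :
    gMat (jetAct A p) = A * gMat p * Aᵀ := by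
  rw [gMat_eq_mul_transpose, of_jetAct_fst, gMat_eq_mul_transpose, transpose_mul]
  simp only [Matrix.mul_assoc]

theorem normProj_eq (p : Jet2 m) (a b : Fin m) :
    normProj p a b = (1 - (of p.1)ᵀ * (gMat p)⁻¹ * of p.1 : Matrix (Fin m) (Fin m) ℝ) a b := by
  simp only [normProj, Fin.sum_univ_two, Matrix.sub_apply, one_apply, mul_apply,
    transpose_apply, of_apply]
  ring

theorem normProj_comm (p : Jet2 m) (a b : Fin m) : normProj p a b = normProj p b a := by
  have hsymm : (1 - (of p.1)ᵀ * (gMat p)⁻¹ * of p.1).IsSymm := by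
    rw [IsSymm, transpose_sub, transpose_one, transpose_mul, transpose_mul, transpose_transpose,
      (gMat_isSymm p).inv, Matrix.mul_assoc]
  rw [normProj_eq, normProj_eq, ← hsymm.apply b a]

theorem normProj_jetAct {A : Matrix (Fin 2) (Fin 2) ℝ} (hA : IsUnit A.det) (p : Jet2 m) :
    normProj (jetAct A p) = normProj p := by
  have hquad : (A * of p.1)ᵀ * (A * gMat p * Aᵀ)⁻¹ * (A * of p.1) =
      (of p.1)ᵀ * (gMat p)⁻¹ * of p.1 := by
    rw [transpose_mul, ← transpose_mul_inv_conj_mul hA (gMat p)]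
    simp only [Matrix.mul_assoc]
  ext a b
  rw [normProj_eq, normProj_eq, of_jetAct_fst, gMat_jetAct, hquad]

noncomputable def wSymMat (p : Jet2 m) (a : Fin m) : Matrix (Fin 2) (Fin 2) ℝ := of (wSym p a)

theorem wSymMat_jetAct (A : Matrix (Fin 2) (Fin 2) ℝ) (p : Jet2 m) (a : Fin m) :
    wSymMat (jetAct A p) a = A * wSymMat p a * Aᵀ := by
  ext k l
  simp only [wSymMat, wSym, jetAct, of_apply, mul_apply, transpose_apply, Fin.sum_univ_two]
  ring

theorem sum_sum_mul_of_comm {ι R : Type*} [CommRing R] (s : Finset ι) (F P : ι → ι → R)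
    (hP : ∀ a b, P a b = P b a) :
    ∑ a ∈ s, ∑ b ∈ s, (F a b + F b a) * P a b = 2 * ∑ a ∈ s, ∑ b ∈ s, F a b * P a b := by
  have hswap : ∑ a ∈ s, ∑ b ∈ s, F b a * P a b = ∑ a ∈ s, ∑ b ∈ s, F a b * P a b := by
    rw [Finset.sum_comm]
    simp only [hP]
  simp only [add_mul, Finset.sum_add_distrib, hswap]
  ring

theorem gaussL_eq_polarDet (p : Jet2 m) :
    gaussL p = (∑ a, ∑ b, polarDet (wSymMat p a) (wSymMat p b) * normProj p a b) /
      (2 * √(gMat p).det) := by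
  have hpolar : ∀ a b, polarDet (wSymMat p a) (wSymMat p b) =
      (wSym p a 0 0 * wSym p b 1 1 - wSym p a 0 1 * wSym p b 0 1) +
        (wSym p b 0 0 * wSym p a 1 1 - wSym p b 0 1 * wSym p a 0 1) := by
    intro a b
    simp only [polarDet, wSymMat, det_fin_two, Matrix.add_apply, of_apply, wSym]
    ring
  simp only [hpolar, sum_sum_mul_of_comm _ _ _ (normProj_comm p), gaussL]
  rw [mul_div_mul_left _ _ two_ne_zero]

theorem gaussL_jetAct {A : Matrix (Fin 2) (Fin 2) ℝ} (hA : A.det ≠ 0) (p : Jet2 m) :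
    gaussL (jetAct A p) = |A.det| * gaussL p := by
  have hsqrt : √(gMat (jetAct A p)).det = |A.det| * √(gMat p).det := by
    rw [gMat_jetAct, det_mul, det_mul, det_transpose, mul_right_comm, ← sq,
      Real.sqrt_mul (sq_nonneg _), Real.sqrt_sq_eq_abs]
  simp only [gaussL_eq_polarDet, wSymMat_jetAct, polarDet_conj, normProj_jetAct hA.isUnit, hsqrt]
  have habs : |A.det| ≠ 0 := abs_ne_zero.mpr hA
  simp only [← sq_abs A.det, mul_assoc, ← Finset.mul_sum]
  rw [sq, mul_assoc, mul_left_comm 2, mul_div_mul_left _ _ habs, mul_div_assoc]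

theorem differentiableAt_gMat_apply (p : Jet2 m) (i j : Fin 2) :
    DifferentiableAt ℝ (fun q : Jet2 m => gMat q i j) p := by
  simp only [gMat, of_apply]
  fun_prop

theorem differentiableAt_normProj {p : Jet2 m} (hg : (gMat p).det ≠ 0) (a b : Fin m) :
    DifferentiableAt ℝ (fun q : Jet2 m => normProj q a b) p := by
  have hcoord : ∀ i c, DifferentiableAt ℝ (fun q : Jet2 m => q.1 i c) p := by
    intro i c
    fun_prop
  have hinv := DifferentiableAt.matrix_inv_apply (differentiableAt_gMat_apply p) hg
  simp only [normProj]
  refine (differentiableAt_const _).sub (DifferentiableAt.fun_sum fun i _ =>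
    DifferentiableAt.fun_sum fun j _ => ?_)
  exact ((hcoord i a).mul (hinv i j)).mul (hcoord j b)

theorem differentiableAt_gaussL {p : Jet2 m} (hg : 0 < (gMat p).det) :
    DifferentiableAt ℝ gaussL p := by
  have hdet := DifferentiableAt.matrix_det (differentiableAt_gMat_apply p)
  have hP := differentiableAt_normProj hg.ne'
  have hw : ∀ a i j, DifferentiableAt ℝ (fun q : Jet2 m => wSym q a i j) p := by
    intro a i j
    unfold wSym
    fun_prop
  unfold gaussL
  simp only [div_eq_mul_inv]
  refine (DifferentiableAt.fun_sum fun a _ => DifferentiableAt.fun_sum fun b _ => ?_).mul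
    ((hdet.sqrt hg.ne').inv (Real.sqrt_pos.2 hg).ne')
  exact ((((hw a 0 0).mul (hw b 1 1)).sub ((hw a 0 1).mul (hw b 0 1)))).mul (hP a b)

noncomputable def jetActDeriv (E : Matrix (Fin 2) (Fin 2) ℝ) (p : Jet2 m) : Jet2 m :=
  (fun k a => ∑ l, E k l * p.1 l a,
    fun k l a => ∑ r, E k r * p.2 r l a + ∑ s, E l s * p.2 k s a)

theorem jetAct_one_add_smul (E : Matrix (Fin 2) (Fin 2) ℝ) (t : ℝ) (p : Jet2 m) :
    jetAct (1 + t • E) p =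
      p + t • jetActDeriv E p + t ^ 2 • ((0, (jetAct E p).2) : Jet2 m) := by
  refine Prod.ext (funext fun k => funext fun a => ?_)
    (funext fun k => funext fun l => funext fun a => ?_)
  · simp only [jetAct, jetActDeriv, Prod.fst_add, Prod.smul_fst, Pi.add_apply, Pi.smul_apply,
      smul_eq_mul, Matrix.add_apply, Matrix.smul_apply, one_apply, Fin.sum_univ_two, Pi.zero_apply]
    fin_cases k <;>
      simp only [Fin.zero_eta, Fin.mk_one, Fin.isValue, ↓reduceIte, zero_ne_one, one_ne_zero,
        zero_add, mul_zero, add_zero] <;> ring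
  · simp only [jetAct, jetActDeriv, Prod.snd_add, Prod.smul_snd, Pi.add_apply, Pi.smul_apply,
      smul_eq_mul, Matrix.add_apply, Matrix.smul_apply, one_apply, Fin.sum_univ_two]
    fin_cases k <;> fin_cases l <;>
      simp only [Fin.zero_eta, Fin.mk_one, Fin.isValue, ↓reduceIte, zero_ne_one, one_ne_zero,
        zero_add] <;> ring

theorem hasDerivAt_jetAct (E : Matrix (Fin 2) (Fin 2) ℝ) (p : Jet2 m) :
    HasDerivAt (fun t : ℝ => jetAct (1 + t • E) p) (jetActDeriv E p) 0 := by
  simp_rw [jetAct_one_add_smul]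
  simpa using (((hasDerivAt_id (0 : ℝ)).smul_const (jetActDeriv E p)).const_add p).fun_add
    ((hasDerivAt_pow 2 (0 : ℝ)).smul_const ((0, (jetAct E p).2) : Jet2 m))

theorem fderiv_gaussL_jetActDeriv {p : Jet2 m} (hg : 0 < (gMat p).det)
    (E : Matrix (Fin 2) (Fin 2) ℝ) :
    fderiv ℝ gaussL p (jetActDeriv E p) = E.trace * gaussL p := by
  have hchain : HasDerivAt (fun t : ℝ => gaussL (jetAct (1 + t • E) p))
      (fderiv ℝ gaussL p (jetActDeriv E p)) 0 := by
    have hstart : jetAct (1 + (0 : ℝ) • E) p = p := by rw [jetAct_one_add_smul]; simp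
    have hF : HasFDerivAt gaussL (fderiv ℝ gaussL p) (jetAct (1 + (0 : ℝ) • E) p) := by
      rw [hstart]
      exact (differentiableAt_gaussL hg).hasFDerivAt
    exact hF.comp_hasDerivAt 0 (hasDerivAt_jetAct E p)
  have hdet_pos : ∀ᶠ t : ℝ in 𝓝 0, 0 < (1 + t • E).det :=
    (hasDerivAt_det_one_add_smul E).continuousAt.eventually (lt_mem_nhds (by simp))
  have hcov : HasDerivAt (fun t : ℝ => gaussL (jetAct (1 + t • E) p)) (E.trace * gaussL p) 0 :=
    ((hasDerivAt_det_one_add_smul E).mul_const (gaussL p)).congr_of_eventuallyEq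
      (hdet_pos.mono fun t ht => by dsimp only; rw [gaussL_jetAct ht.ne', abs_of_pos ht])
  exact hchain.unique hcov

noncomputable def eU (j : Fin 2) (a : Fin m) : Jet2 m :=
  (fun i' a' => if i' = j ∧ a' = a then 1 else 0, 0)

noncomputable def eW (j l : Fin 2) (a : Fin m) : Jet2 m :=
  (0, fun i' j' a' => if i' = j ∧ j' = l ∧ a' = a then 1 else 0)

theorem pdU_eq_fderiv {L : Jet2 m → ℝ} {p : Jet2 m} (hL : DifferentiableAt ℝ L p)
    (j : Fin 2) (a : Fin m) : pdU j a L p = fderiv ℝ L p (eU j a) := by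
  have hline : ∀ t, ((fun i' a' => if i' = j ∧ a' = a then t else p.1 i' a', p.2) : Jet2 m) =
      p + (t - p.1 j a) • eU j a := by
    intro t
    refine Prod.ext (funext fun i' => funext fun a' => ?_) (funext fun i' => ?_)
    · simp only [eU, Prod.fst_add, Prod.smul_fst, Pi.add_apply, Pi.smul_apply, smul_eq_mul]
      split_ifs with h
      · obtain ⟨rfl, rfl⟩ := h
        ring
      · ring
    · simp [eU]
  simp only [pdU, hline]
  exact hL.hasFDerivAt.deriv_add_sub_smul _ _

theorem pdW_eq_fderiv {L : Jet2 m → ℝ} {p : Jet2 m} (hL : DifferentiableAt ℝ L p)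
    (j l : Fin 2) (a : Fin m) : pdW j l a L p = fderiv ℝ L p (eW j l a) := by
  have hline : ∀ t, ((p.1, fun i' j' a' =>
      if i' = j ∧ j' = l ∧ a' = a then t else p.2 i' j' a') : Jet2 m) =
      p + (t - p.2 j l a) • eW j l a := by
    intro t
    refine Prod.ext (funext fun i' => ?_)
      (funext fun i' => funext fun j' => funext fun a' => ?_)
    · simp [eW]
    · simp only [eW, Prod.snd_add, Prod.smul_snd, Pi.add_apply, Pi.smul_apply, smul_eq_mul]
      split_ifs with h
      · obtain ⟨rfl, rfl, rfl⟩ := h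
        ring
      · ring
  simp only [pdW, hline]
  exact hL.hasFDerivAt.deriv_add_sub_smul _ _

theorem jetActDeriv_single (i j : Fin 2) (p : Jet2 m) :
    jetActDeriv (single j i 1) p = ∑ a, p.1 i a • eU j a +
      (∑ a, ∑ l, p.2 i l a • eW j l a + ∑ a, ∑ k, p.2 k i a • eW k j a) := by
  refine Prod.ext (funext fun k => funext fun a => ?_)
    (funext fun k => funext fun l => funext fun a => ?_)
  · simp [jetActDeriv, eU, eW, single_apply, Prod.fst_sum, ite_and, eq_comm, -Fin.sum_univ_two]
  · simp [jetActDeriv, eU, eW, single_apply, Prod.snd_sum, ite_and, eq_comm, -Fin.sum_univ_two]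

end Jets

theorem gaussL_covariant_general {m : ℕ} (p : Jet2 m) (hpos : (gMat p).PosDef) :
    ∀ i j : Fin 2,
      (∑ a, p.1 i a * pdU j a gaussL p) +
        ((∑ a, ∑ l, p.2 i l a * pdW j l a gaussL p) +
          (∑ a, ∑ k, p.2 k i a * pdW k j a gaussL p)) =
      (if j = i then 1 else 0) * gaussL p := by
  intro i j
  have hg : 0 < (gMat p).det := hpos.det_pos
  have hL := differentiableAt_gaussL hg
  have htrace : (single j i (1 : ℝ)).trace = if j = i then 1 else 0 := by
    split_ifs with h
    · rw [h, trace_single_eq_same]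
    · exact trace_single_eq_of_ne _ _ _ h
  simp only [pdU_eq_fderiv hL, pdW_eq_fderiv hL, ← htrace, ← fderiv_gaussL_jetActDeriv hg,
    jetActDeriv_single, map_add, map_sum, map_smul, smul_eq_mul]

/-- `L` is a covariant 2-Lagrangian of weight 1 in the
infinitesimal sense: for all `i, j ∈ {1,2}`,
`x^a_i ∂L/∂x^a_j + 2 x^a_{ik} ∂L/∂x^a_{jk} = δ^j_i L` (summation over `a, k`;
with the second-derivative variables kept as a full matrix, the middle term
reads `Σ_{a,l} x^a_{il} ∂L/∂x^a_{jl} + Σ_{a,k} x^a_{ki} ∂L/∂x^a_{kj}`). -/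
theorem gaussL_covariant {m : ℕ} (p : Jet2 m) (hpos : (gMat p).PosDef)
    (hsym : ∀ (a : Fin m) (i j : Fin 2), p.2 i j a = p.2 j i a) :
    ∀ i j : Fin 2,
      (∑ a, p.1 i a * pdU j a gaussL p) +
        ((∑ a, ∑ l, p.2 i l a * pdW j l a gaussL p) +
          (∑ a, ∑ k, p.2 k i a * pdW k j a gaussL p)) =
      (if j = i then 1 else 0) * gaussL p :=
  gaussL_covariant_general p hpos
end
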